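/- arXiv:1511.04413 — 16 statements merged into one kernel-verified Lean document; each statement's English description precedes it below -/
import Mathlib

section
/- Let n and m be natural numbers, let d_1,…,d_n, g_1,…,g_m, y, w be rational numbers, and for every positive integer k set A(k) := −(1/k)·(1 + Σ_{i=1}^{n} ⌊d_i·k⌋ + Σ_{j=1}^{m} (⌈g_j·k⌉ − 1)). Suppose ŷ₋ ∈ ℚ is the greatest element of the set { A(k) − ⌊y·k⌋/k : k a positive integer } and y₋ ∈ ℚ is the greatest element of the set { A(k) − (⌈w·k⌉ − 1)/k : k a positive integer }. Then w > ŷ₋ if and only if y ≥ y₋. -/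
/-- Claim 4.1 (first equivalence): with
`A k = -(1/k)·(1 + Σ⌊dᵢk⌋ + Σ(⌈gⱼk⌉ - 1))`,
if `ŷ₋` is the greatest element of `{A k - ⌊yk⌋/k : k > 0}` and
`y₋` is the greatest element of `{A k - (⌈wk⌉ - 1)/k : k > 0}`,
then `w > ŷ₋ ↔ y ≥ y₋`. -/
theorem stmt_0 (n m : ℕ) (d : Fin n → ℚ) (g : Fin m → ℚ) (y w yhatneg yneg : ℚ)
    (A : ℕ → ℚ)
    (hA : ∀ k : ℕ, 0 < k →
      A k = -(1/(k:ℚ)) * (1 + (∑ i, (⌊d i * (k:ℚ)⌋ : ℚ))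
        + ∑ j, ((⌈g j * (k:ℚ)⌉ : ℚ) - 1)))
    (h1 : IsGreatest {x : ℚ | ∃ k : ℕ, 0 < k ∧
      x = A k - (⌊y * (k:ℚ)⌋ : ℚ)/(k:ℚ)} yhatneg)
    (h2 : IsGreatest {x : ℚ | ∃ k : ℕ, 0 < k ∧
      x = A k - ((⌈w * (k:ℚ)⌉ : ℚ) - 1)/(k:ℚ)} yneg) :
    w > yhatneg ↔ y ≥ yneg := by
  have key : ∀ k : ℕ, 0 < k →
      ((A k - (⌊y * (k:ℚ)⌋ : ℚ)/(k:ℚ) < w) ↔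
        (A k - ((⌈w * (k:ℚ)⌉ : ℚ) - 1)/(k:ℚ) ≤ y)) := by
    intro k hk
    have hk0 : (0:ℚ) < (k:ℚ) := by exact_mod_cast hk
    set N : ℤ := 1 + (∑ i, ⌊d i * (k:ℚ)⌋) + ∑ j, (⌈g j * (k:ℚ)⌉ - 1) with hN
    have hAk : A k = -(N:ℚ) / (k:ℚ) := by
      rw [hA k hk, hN]
      push_cast
      field_simp
    have e1 : A k - (⌊y * (k:ℚ)⌋ : ℚ)/(k:ℚ)
        = (((-N - ⌊y * (k:ℚ)⌋ : ℤ) : ℚ))/(k:ℚ) := by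
      rw [hAk]; push_cast; ring
    have e2 : A k - ((⌈w * (k:ℚ)⌉ : ℚ) - 1)/(k:ℚ)
        = (((-N - (⌈w * (k:ℚ)⌉ - 1) : ℤ) : ℚ))/(k:ℚ) := by
      rw [hAk]; push_cast; ring
    rw [e1, e2, div_lt_iff₀ hk0, div_le_iff₀ hk0]
    rw [show ((((-N - ⌊y * (k:ℚ)⌋ : ℤ)):ℚ) < w * (k:ℚ)) ↔
        ((-N - ⌊y * (k:ℚ)⌋ : ℤ) < ⌈w * (k:ℚ)⌉) from (Int.lt_ceil).symm]
    rw [show ((((-N - (⌈w * (k:ℚ)⌉ - 1) : ℤ)):ℚ) ≤ y * (k:ℚ)) ↔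
        ((-N - (⌈w * (k:ℚ)⌉ - 1) : ℤ) ≤ ⌊y * (k:ℚ)⌋) from (Int.le_floor).symm]
    omega
  constructor
  · intro hw
    obtain ⟨k, hk, hx⟩ := h2.1
    obtain ⟨hmem, hub⟩ := h1
    have : A k - (⌊y * (k:ℚ)⌋ : ℚ)/(k:ℚ) < w :=
      lt_of_le_of_lt (hub ⟨k, hk, rfl⟩) hw
    rw [hx]
    exact (key k hk).mp this
  · intro hy
    obtain ⟨k, hk, hx⟩ := h1.1
    have : A k - ((⌈w * (k:ℚ)⌉ : ℚ) - 1)/(k:ℚ) ≤ y :=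
      le_trans (h2.2 ⟨k, hk, rfl⟩) hy
    rw [hx]
    exact (key k hk).mpr this
end

section
/- Let n and m be natural numbers, let d_1,…,d_n, g_1,…,g_m, y, w be rational numbers, and for every positive integer k set B(k) := −(1/k)·(−1 + Σ_{i=1}^{n} ⌈d_i·k⌉ + Σ_{j=1}^{m} (⌊g_j·k⌋ + 1)). Suppose ŷ₊ ∈ ℚ is the least element of the set { B(k) − ⌈y·k⌉/k : k a positive integer } and y₊ ∈ ℚ is the least element of the set { B(k) − (⌊w·k⌋ + 1)/k : k a positive integer }. Then w < ŷ₊ if and only if y ≤ y₊. -/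
/-- Claim 4.1 (second equivalence): with
`B k = -(1/k)·(-1 + Σ⌈dᵢk⌉ + Σ(⌊gⱼk⌋ + 1))`,
if `ŷ₊` is the least element of `{B k - ⌈yk⌉/k : k > 0}` and
`y₊` is the least element of `{B k - (⌊wk⌋ + 1)/k : k > 0}`,
then `w < ŷ₊ ↔ y ≤ y₊`. -/
theorem stmt_1 (n m : ℕ) (d : Fin n → ℚ) (g : Fin m → ℚ) (y w yhatpos ypos : ℚ)
    (B : ℕ → ℚ)
    (hB : ∀ k : ℕ, 0 < k →
      B k = -(1/(k:ℚ)) * (-1 + (∑ i, (⌈d i * (k:ℚ)⌉ : ℚ))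
        + ∑ j, ((⌊g j * (k:ℚ)⌋ : ℚ) + 1)))
    (h1 : IsLeast {x : ℚ | ∃ k : ℕ, 0 < k ∧
      x = B k - (⌈y * (k:ℚ)⌉ : ℚ)/(k:ℚ)} yhatpos)
    (h2 : IsLeast {x : ℚ | ∃ k : ℕ, 0 < k ∧
      x = B k - ((⌊w * (k:ℚ)⌋ : ℚ) + 1)/(k:ℚ)} ypos) :
    w < yhatpos ↔ y ≤ ypos := by
  have key : ∀ k : ℕ, 0 < k →
      (w < B k - (⌈y * (k:ℚ)⌉ : ℚ)/(k:ℚ) ↔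
        y ≤ B k - ((⌊w * (k:ℚ)⌋ : ℚ) + 1)/(k:ℚ)) := by
    intro k hk
    have hk0 : (0:ℚ) < (k:ℚ) := by exact_mod_cast hk
    set N : ℤ := 1 - (∑ i, ⌈d i * (k:ℚ)⌉) - ∑ j, (⌊g j * (k:ℚ)⌋ + 1) with hN
    have hBk : B k = (N:ℚ)/(k:ℚ) := by
      rw [hB k hk, hN]
      push_cast
      field_simp
      ring
    have e1 : B k - (⌈y * (k:ℚ)⌉ : ℚ)/(k:ℚ) = ((N - ⌈y * (k:ℚ)⌉ : ℤ) : ℚ)/(k:ℚ) := by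
      rw [hBk]; push_cast; ring
    have e2 : B k - ((⌊w * (k:ℚ)⌋ : ℚ) + 1)/(k:ℚ)
        = ((N - (⌊w * (k:ℚ)⌋ + 1) : ℤ) : ℚ)/(k:ℚ) := by
      rw [hBk]; push_cast; ring
    rw [e1, e2, lt_div_iff₀ hk0, le_div_iff₀ hk0, ← Int.floor_lt, ← Int.ceil_le]
    omega
  obtain ⟨⟨k1, hk1, hx1⟩, hlb1⟩ := h1
  obtain ⟨⟨k2, hk2, hx2⟩, hlb2⟩ := h2
  constructor
  · intro hw
    rw [hx2]
    exact (key k2 hk2).mp (lt_of_lt_of_le hw (hlb1 ⟨k2, hk2, rfl⟩))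
  · intro hy
    rw [hx1]
    exact (key k1 hk1).mpr (le_trans hy (hlb2 ⟨k1, hk1, rfl⟩))
end

section
/- Let n ≥ 0 and m ≥ 1 be natural numbers and let d_1,…,d_n, g_1,…,g_m be rational numbers; assume that if m = 1 then at least two of the d_i are not integers. If y₋ ∈ ℚ is the greatest element of the set { −(1/k)·(1 + Σ_{i=1}^{n} ⌊d_i·k⌋ + Σ_{j=1}^{m} (⌈g_j·k⌉ − 1)) : k a positive integer }, then y₋ > −Σ_{i=1}^{n} d_i − Σ_{j=1}^{m} g_j. -/
lemma aux_den_mul (q : ℚ) (c : ℕ) (hc : (q.den : ℕ) ∣ c) :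
    ∃ z : ℤ, (z : ℚ) = q * c := by
  obtain ⟨t, ht⟩ := hc
  refine ⟨q.num * t, ?_⟩
  have h1 : (q : ℚ) * q.den = q.num := Rat.mul_den_eq_num q
  push_cast [ht]
  rw [← mul_assoc, h1]

/-- Claim 4.2 (first inequality): if `m ≥ 1` and (when `m = 1`) at least two of the
`dᵢ` are not integers, and `y₋` is the greatest element of
`{-(1/k)·(1 + Σ⌊dᵢk⌋ + Σ(⌈gⱼk⌉ - 1)) : k > 0}`, then `y₋ > -Σdᵢ - Σgⱼ`. -/
theorem stmt_2 (n m : ℕ) (d : Fin n → ℚ) (g : Fin m → ℚ) (yneg : ℚ)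
    (hm : 1 ≤ m)
    (hsolid : m = 1 → ∃ i j : Fin n, i ≠ j ∧
      (¬∃ z : ℤ, (z:ℚ) = d i) ∧ (¬∃ z : ℤ, (z:ℚ) = d j))
    (h : IsGreatest {x : ℚ | ∃ k : ℕ, 0 < k ∧
      x = -(1/(k:ℚ)) * (1 + (∑ i, (⌊d i * (k:ℚ)⌋ : ℚ))
        + ∑ j, ((⌈g j * (k:ℚ)⌉ : ℚ) - 1))} yneg) :
    yneg > -(∑ i, d i) - ∑ j, g j := by
  obtain ⟨hmem, hub⟩ := h
  set S : ℚ := (∑ i, d i) + ∑ j, g j with hS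
  suffices hk : ∃ k : ℕ, 0 < k ∧
      (1 + (∑ i, (⌊d i * (k:ℚ)⌋ : ℚ)) + ∑ j, ((⌈g j * (k:ℚ)⌉ : ℚ) - 1)) < (k:ℚ) * S by
    obtain ⟨k, hk0, hlt⟩ := hk
    have hx : -(1/(k:ℚ)) * (1 + (∑ i, (⌊d i * (k:ℚ)⌋ : ℚ))
        + ∑ j, ((⌈g j * (k:ℚ)⌉ : ℚ) - 1)) ≤ yneg := hub ⟨k, hk0, rfl⟩
    have hkq : (0:ℚ) < k := by exact_mod_cast hk0
    have h1 : (1/(k:ℚ)) * (1 + (∑ i, (⌊d i * (k:ℚ)⌋ : ℚ))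
        + ∑ j, ((⌈g j * (k:ℚ)⌉ : ℚ) - 1)) < (1/(k:ℚ)) * ((k:ℚ) * S) :=
      mul_lt_mul_of_pos_left hlt (by positivity)
    have h2 : (1/(k:ℚ)) * ((k:ℚ) * S) = S := by field_simp
    have h3 : -(∑ i, d i) - ∑ j, g j = -S := by rw [hS]; ring
    rw [gt_iff_lt, h3]
    calc -S = -((1/(k:ℚ)) * ((k:ℚ) * S)) := by rw [h2]
    _ < -((1/(k:ℚ)) * (1 + (∑ i, (⌊d i * (k:ℚ)⌋ : ℚ))
        + ∑ j, ((⌈g j * (k:ℚ)⌉ : ℚ) - 1))) := by linarith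
    _ ≤ yneg := by rw [neg_mul] at hx; exact hx
  -- common denominator
  set N : ℕ := (∏ i, (d i).den) * (∏ j, (g j).den) with hN
  have hNpos : 0 < N := by
    apply Nat.mul_pos <;> exact Finset.prod_pos (fun _ _ => Rat.den_pos _)
  have hdint : ∀ i, ∃ z : ℤ, (z : ℚ) = d i * (N : ℚ) := by
    intro i
    exact aux_den_mul (d i) N (Dvd.dvd.mul_right
      (Finset.dvd_prod_of_mem (fun i => (d i).den) (Finset.mem_univ i)) _)
  have hgint : ∀ j, ∃ z : ℤ, (z : ℚ) = g j * (N : ℚ) := by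
    intro j
    exact aux_den_mul (g j) N (Dvd.dvd.mul_left
      (Finset.dvd_prod_of_mem (fun j => (g j).den) (Finset.mem_univ j)) _)
  rcases eq_or_lt_of_le hm with hm1 | hm2
  · -- m = 1 case
    obtain ⟨i0, j0, hij, hi0, hj0⟩ := hsolid hm1.symm
    have hfi0 : Int.fract (d i0) ≠ 0 := by
      intro hfr
      exact hi0 ⟨⌊d i0⌋, by have := Int.fract_add_floor (d i0); rw [hfr] at this; linarith⟩
    have hfj0 : Int.fract (d j0) ≠ 0 := by
      intro hfr
      exact hj0 ⟨⌊d j0⌋, by have := Int.fract_add_floor (d j0); rw [hfr] at this; linarith⟩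
    have hden2 : 2 ≤ (d i0).den := by
      rcases Nat.lt_or_ge (d i0).den 2 with hlt | hge
      · interval_cases hd : (d i0).den
        · exact absurd hd (d i0).den_nz
        · exact absurd ⟨(d i0).num, (Rat.den_eq_one_iff _).mp hd⟩ hi0
      · exact hge
    have hN2 : 2 ≤ N := by
      have h1 : (d i0).den ∣ N :=
        Dvd.dvd.mul_right (Finset.dvd_prod_of_mem (fun i => (d i).den) (Finset.mem_univ i0)) _
      exact le_trans hden2 (Nat.le_of_dvd hNpos h1)
    -- the key identity
    have key : ∀ k : ℚ, (k:ℚ) * S - (1 + (∑ i, (⌊d i * k⌋ : ℚ)) + ∑ j, ((⌈g j * k⌉ : ℚ) - 1))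
        = (∑ i, Int.fract (d i * k)) + (∑ j, (g j * k - (⌈g j * k⌉ : ℚ))) + ((m : ℚ) - 1) := by
      intro k
      simp only [Int.fract, hS]
      rw [Finset.sum_sub_distrib, Finset.sum_sub_distrib, Finset.sum_sub_distrib,
        Finset.sum_const, Finset.card_univ, Fintype.card_fin]
      have e1 : ∑ i, d i * k = (∑ i, d i) * k := by rw [Finset.sum_mul]
      have e2 : ∑ j, g j * k = (∑ j, g j) * k := by rw [Finset.sum_mul]
      rw [e1, e2]
      ring
    -- fract pairing
    have hcast : ((N - 1 : ℕ) : ℚ) = (N : ℚ) - 1 := by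
      push_cast [Nat.cast_sub (le_trans one_le_two hN2)]; ring
    have hpair : ∀ i : Fin n, Int.fract (d i) ≠ 0 →
        Int.fract (d i * ((1:ℕ):ℚ)) + Int.fract (d i * ((N - 1 : ℕ):ℚ)) = 1 := by
      intro i hfr
      obtain ⟨z, hz⟩ := hdint i
      have e : d i * ((N - 1 : ℕ):ℚ) = -(d i) + (z : ℚ) := by rw [hcast, hz]; ring
      rw [e, Int.fract_add_intCast, Int.fract_neg hfr]
      simp
    -- sum of paired fracts ≥ 2
    have hsum2 : (2:ℚ) ≤ (∑ i, Int.fract (d i * ((1:ℕ):ℚ)))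
        + ∑ i, Int.fract (d i * ((N - 1 : ℕ):ℚ)) := by
      rw [← Finset.sum_add_distrib]
      have hsub : ({i0, j0} : Finset (Fin n)) ⊆ Finset.univ := Finset.subset_univ _
      have hle := Finset.sum_le_sum_of_subset_of_nonneg (f := fun i =>
          Int.fract (d i * ((1:ℕ):ℚ)) + Int.fract (d i * ((N - 1 : ℕ):ℚ))) hsub
        (fun i _ _ => add_nonneg (Int.fract_nonneg _) (Int.fract_nonneg _))
      rw [Finset.sum_pair hij, hpair i0 hfi0, hpair j0 hfj0] at hle
      linarith
    -- ceiling bound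
    have hgbd : ∀ k : ℚ, -(m : ℚ) < ∑ j, (g j * k - (⌈g j * k⌉ : ℚ)) := by
      intro k
      have : ∑ j : Fin m, (-1 : ℚ) < ∑ j, (g j * k - (⌈g j * k⌉ : ℚ)) := by
        apply Finset.sum_lt_sum_of_nonempty
        · have : Nonempty (Fin m) := ⟨⟨0, hm⟩⟩
          exact Finset.univ_nonempty
        · intro j _
          have := Int.ceil_lt_add_one (g j * k)
          linarith
      simpa using this
    have k1 := key ((1:ℕ):ℚ)
    have k2 := key ((N - 1 : ℕ):ℚ)
    have hmq : (m : ℚ) = 1 := by rw [← hm1]; norm_num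
    have hg1 := hgbd ((1:ℕ):ℚ)
    have hg2 := hgbd ((N - 1 : ℕ):ℚ)
    by_contra hcon
    push_neg at hcon
    have hc1 := hcon 1 one_pos
    have hc2 := hcon (N - 1) (by omega)
    rw [hmq] at k1 k2
    rw [hmq] at hg1 hg2
    linarith
  · -- m ≥ 2 case
    refine ⟨N, hNpos, ?_⟩
    have hfl : ∀ i, (⌊d i * (N:ℚ)⌋ : ℚ) = d i * N := by
      intro i
      obtain ⟨z, hz⟩ := hdint i
      rw [← hz, Int.floor_intCast]
    have hcl : ∀ j, (⌈g j * (N:ℚ)⌉ : ℚ) = g j * N := by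
      intro j
      obtain ⟨z, hz⟩ := hgint j
      rw [← hz, Int.ceil_intCast]
    have e1 : (∑ i, (⌊d i * (N:ℚ)⌋ : ℚ)) = (∑ i, d i) * N := by
      rw [Finset.sum_congr rfl (fun i _ => hfl i), ← Finset.sum_mul]
    have e2 : (∑ j, ((⌈g j * (N:ℚ)⌉ : ℚ) - 1)) = (∑ j, g j) * N - m := by
      rw [Finset.sum_sub_distrib, Finset.sum_congr rfl (fun j _ => hcl j),
        ← Finset.sum_mul]
      simp [Finset.card_univ]
    have hmq : (2:ℚ) ≤ m := by exact_mod_cast hm2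
    rw [e1, e2, hS]
    nlinarith [hmq]
end

section
/- Let n ≥ 0 and m ≥ 1 be natural numbers and let d_1,…,d_n, g_1,…,g_m be rational numbers; assume that if m = 1 then at least two of the d_i are not integers. If y₊ ∈ ℚ is the least element of the set { −(1/k)·(−1 + Σ_{i=1}^{n} ⌈d_i·k⌉ + Σ_{j=1}^{m} (⌊g_j·k⌋ + 1)) : k a positive integer }, then y₊ < −Σ_{i=1}^{n} d_i − Σ_{j=1}^{m} g_j. -/
lemma den_dvd_int' (q : ℚ) (k : ℕ) (hd : q.den ∣ k) : ∃ z : ℤ, (z:ℚ) = q * (k:ℚ) := by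
  obtain ⟨t, ht⟩ := hd
  refine ⟨q.num * t, ?_⟩
  have h1 : (q * q.den : ℚ) = q.num := Rat.mul_den_eq_num q
  subst ht
  push_cast
  rw [← h1]; ring

lemma ceil_of_nonint' (a:ℚ) (ha : ¬∃ z:ℤ, (z:ℚ)=a) : ⌈a⌉ = ⌊a⌋ + 1 := by
  have h1 := Int.ceil_le_floor_add_one a
  have h2 : ⌊a⌋ < ⌈a⌉ := by
    by_contra hle
    push_neg at hle
    have : a = ⌊a⌋ := le_antisymm (le_trans (Int.le_ceil a) (by exact_mod_cast hle)) (Int.floor_le a)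
    exact ha ⟨⌊a⌋, this.symm⟩
  omega

lemma nonint_den (a:ℚ) (ha : ¬∃ z:ℤ, (z:ℚ)=a) : 2 ≤ a.den := by
  rcases Nat.lt_or_ge a.den 2 with h | h
  · interval_cases h' : a.den
    · exact absurd h' a.den_nz
    · exact absurd ⟨a.num, by exact_mod_cast (Rat.den_eq_one_iff a).mp h'⟩ ha
  · exact h

/-- ceil pair identity for a non-integer `a` with `a*L` an integer. -/
lemma ceil_pair (a : ℚ) (ha : ¬∃ z:ℤ, (z:ℚ)=a) (L : ℚ) (za : ℤ)
    (hza : (za:ℚ) = a * L) :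
    (⌈a⌉:ℚ) + (⌈a * (L-1)⌉:ℚ) = a + a * (L-1) + 1 := by
  have h1 : a * (L-1) = -a + (za:ℚ) := by rw [hza]; ring
  have h2 : ⌈a * (L-1)⌉ = -⌊a⌋ + za := by
    rw [h1, Int.ceil_add_intCast, Int.ceil_neg]
  have h3 : ⌈a⌉ = ⌊a⌋ + 1 := ceil_of_nonint' a ha
  rw [h3, h2, h1]
  push_cast
  ring

/-- floor pair bound with `c*L` an integer. -/
lemma floor_pair (c : ℚ) (L : ℚ) (zc : ℤ) (hzc : (zc:ℚ) = c * L) :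
    c + c * (L-1) - 1 ≤ (⌊c⌋:ℚ) + (⌊c * (L-1)⌋:ℚ) := by
  have h1 : c * (L-1) = -c + (zc:ℚ) := by rw [hzc]; ring
  have h2 : ⌊c * (L-1)⌋ = -⌈c⌉ + zc := by
    rw [h1, Int.floor_add_intCast, Int.floor_neg]
  have h3 : (⌈c⌉:ℤ) ≤ ⌊c⌋ + 1 := Int.ceil_le_floor_add_one c
  have h4 : ((-⌈c⌉ + zc : ℤ):ℚ) = -(⌈c⌉:ℚ) + zc := by push_cast; ring
  rw [h2, h4, hzc]
  have h5 : (⌈c⌉:ℚ) ≤ (⌊c⌋:ℚ) + 1 := by exact_mod_cast h3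
  linarith

/-- Claim 4.2 (second inequality): if `m ≥ 1` and (when `m = 1`) at least two of the
`dᵢ` are not integers, and `y₊` is the least element of
`{-(1/k)·(-1 + Σ⌈dᵢk⌉ + Σ(⌊gⱼk⌋ + 1)) : k > 0}`, then `y₊ < -Σdᵢ - Σgⱼ`. -/
theorem stmt_3 (n m : ℕ) (d : Fin n → ℚ) (g : Fin m → ℚ) (ypos : ℚ)
    (hm : 1 ≤ m)
    (hsolid : m = 1 → ∃ i j : Fin n, i ≠ j ∧
      (¬∃ z : ℤ, (z:ℚ) = d i) ∧ (¬∃ z : ℤ, (z:ℚ) = d j))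
    (h : IsLeast {x : ℚ | ∃ k : ℕ, 0 < k ∧
      x = -(1/(k:ℚ)) * (-1 + (∑ i, (⌈d i * (k:ℚ)⌉ : ℚ))
        + ∑ j, ((⌊g j * (k:ℚ)⌋ : ℚ) + 1))} ypos) :
    ypos < -(∑ i, d i) - ∑ j, g j := by
  have key : ∃ k:ℕ, 0 < k ∧ (k:ℚ)*((∑ i, d i) + ∑ j, g j)
      < -1 + (∑ i, (⌈d i * (k:ℚ)⌉ : ℚ)) + ∑ j, ((⌊g j * (k:ℚ)⌋ : ℚ) + 1) := by
    rcases eq_or_lt_of_le hm with h1 | h2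
    · -- m = 1 case
      obtain ⟨i0, j0, hij, ha, hb⟩ := hsolid h1.symm
      subst h1
      set a := d i0 with ha_def
      set b := d j0 with hb_def
      set c := g 0 with hc_def
      set L : ℕ := a.den * b.den * c.den with hL
      have hLpos : 0 < L := by positivity
      have hL2 : 2 ≤ L := le_trans (nonint_den a ha)
        (Nat.le_of_dvd hLpos ⟨b.den * c.den, by rw [hL]; ring⟩)
      obtain ⟨za, hza⟩ := den_dvd_int' a L ⟨b.den * c.den, by rw [hL]; ring⟩
      obtain ⟨zb, hzb⟩ := den_dvd_int' b L ⟨a.den * c.den, by rw [hL]; ring⟩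
      obtain ⟨zc, hzc⟩ := den_dvd_int' c L ⟨a.den * b.den, by rw [hL]; ring⟩
      by_contra hcon
      push_neg at hcon
      have E1 := hcon 1 one_pos
      have E2 := hcon (L-1) (by omega)
      have hc1 : ((L-1:ℕ):ℚ) = (L:ℚ) - 1 := by
        rw [Nat.cast_sub (by omega : 1 ≤ L), Nat.cast_one]
      simp only [Nat.cast_one, mul_one, one_mul, Fin.sum_univ_one] at E1 E2
      rw [hc1] at E2
      rw [← hc_def] at E1 E2
      -- ceil sum bound
      set F : Fin n → ℚ := fun i =>
        (⌈d i⌉:ℚ) + (⌈d i * ((L:ℚ)-1)⌉:ℚ) - (d i + d i * ((L:ℚ)-1)) with hF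
      have hF0 : ∀ i, 0 ≤ F i := by
        intro i
        have := Int.le_ceil (d i)
        have := Int.le_ceil (d i * ((L:ℚ)-1))
        simp only [hF]
        linarith
      have hFa : F i0 = 1 := by
        simp only [hF, ← ha_def]
        have := ceil_pair a ha (L:ℚ) za hza
        linarith
      have hFb : F j0 = 1 := by
        simp only [hF, ← hb_def]
        have := ceil_pair b hb (L:ℚ) zb hzb
        linarith
      have hFsum : (2:ℚ) ≤ ∑ i, F i := by
        have hs := Finset.sum_le_sum_of_subset_of_nonneg
          (Finset.subset_univ ({i0, j0} : Finset (Fin n))) (fun i _ _ => hF0 i)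
        rw [Finset.sum_pair hij, hFa, hFb] at hs
        linarith
      have hFexp : ∑ i, F i = (∑ i, (⌈d i⌉:ℚ)) + (∑ i, (⌈d i * ((L:ℚ)-1)⌉:ℚ))
          - ((∑ i, d i) + (∑ i, d i) * ((L:ℚ)-1)) := by
        rw [Finset.sum_mul]
        simp only [hF]
        rw [← Finset.sum_add_distrib, ← Finset.sum_add_distrib, ← Finset.sum_sub_distrib]
      have hfloor := floor_pair c (L:ℚ) zc hzc
      rw [hFexp] at hFsum
      nlinarith [hFsum, hfloor, E1, E2]
    · -- 2 ≤ m case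
      set k : ℕ := ∏ j, (g j).den with hk
      have hkpos : 0 < k := Finset.prod_pos (fun j _ => (g j).pos)
      refine ⟨k, hkpos, ?_⟩
      have hfl : ∀ j, ((⌊g j * (k:ℚ)⌋:ℚ)) = g j * k := by
        intro j
        obtain ⟨z, hz⟩ := den_dvd_int' (g j) k
          (Finset.dvd_prod_of_mem _ (Finset.mem_univ j))
        rw [← hz, Int.floor_intCast]
      have hsum2 : ∑ j, ((⌊g j * (k:ℚ)⌋:ℚ) + 1) = (∑ j, g j) * k + m := by
        rw [Finset.sum_add_distrib, Finset.sum_mul]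
        simp [hfl]
      have hceil : (∑ i, (d i * (k:ℚ))) ≤ ∑ i, (⌈d i * (k:ℚ)⌉:ℚ) :=
        Finset.sum_le_sum fun i _ => Int.le_ceil _
      have hd2 : (∑ i, d i * (k:ℚ)) = (∑ i, d i) * k := by rw [← Finset.sum_mul]
      have hm2 : (2:ℚ) ≤ m := by exact_mod_cast h2
      rw [hsum2]
      rw [hd2] at hceil
      nlinarith [hceil, hm2]
  obtain ⟨k, hk, hlt⟩ := key
  have hkQ : (0:ℚ) < k := by exact_mod_cast hk
  have hmem := h.2 ⟨k, hk, rfl⟩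
  have h3 : (1/(k:ℚ)) * ((k:ℚ)*((∑ i, d i) + ∑ j, g j))
      < (1/(k:ℚ)) * (-1 + (∑ i, (⌈d i * (k:ℚ)⌉ : ℚ))
        + ∑ j, ((⌊g j * (k:ℚ)⌋ : ℚ) + 1)) :=
    (mul_lt_mul_iff_right₀ (by positivity)).2 hlt
  rw [one_div, inv_mul_cancel_left₀ (ne_of_gt hkQ)] at h3
  rw [← one_div] at h3
  linarith
end

section
/- Let d, g, y be rational numbers and suppose y₋ ∈ ℚ is the greatest element of the set { −(⌊d·k⌋ + ⌈g·k⌉)/k : k a positive integer }. (i) If neither y nor d is an integer, and ŷ₋ ∈ ℚ is the greatest element of the set { −(1 + ⌊y·k⌋ + ⌊d·k⌋)/k : k a positive integer }, then y ≥ y₋ if and only if g > ŷ₋. (ii) If y is an integer or d is an integer, then y ≥ y₋ if and only if g ≥ −y − d. -/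
/-!
Both `y ≥ y₋` and `g > ŷ₋` unfold, slope by slope, to the same integer inequality
`-⌊yk⌋ - ⌊dk⌋ ≤ ⌈gk⌉` for all `k > 0`, which gives (i). Dropping the roundings, this
inequality yields `(-y - d - g) k < 1` for every `k`, hence `g ≥ -y - d`; conversely, when
`yk` or `dk` is an integer only one floor is left and `g ≥ -y - d` gives it back, which gives (ii).
-/

theorem forall_mem_setOf_exists_eq {ι α : Type*} {p : ι → Prop} {f : ι → α} {q : α → Prop} :
    (∀ x ∈ {x | ∃ i, p i ∧ x = f i}, q x) ↔ ∀ i, p i → q (f i) := by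
  simp only [Set.mem_ofPred_eq, forall_exists_index, and_imp]
  exact ⟨fun h i hi => h _ i hi rfl, fun h x i hi hx => hx ▸ h i hi⟩

theorem le_of_forall_nat_mul_lt_add_one {K : Type*} [Field K] [LinearOrder K]
    [IsStrictOrderedRing K] [Archimedean K] {a b : K}
    (h : ∀ k : ℕ, 0 < k → a * k < b * k + 1) : a ≤ b := by
  by_contra! hba
  have hab : 0 < a - b := sub_pos.2 hba
  obtain ⟨n, hn⟩ := exists_nat_gt (1 / (a - b))
  have hn0 : (0 : K) < n := lt_trans (by positivity) hn
  rw [div_lt_iff₀ hab] at hn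
  linarith [h n (Nat.cast_pos.1 hn0)]

section FloorRing

variable {K : Type*} [Field K] [LinearOrder K] [IsStrictOrderedRing K] [FloorRing K]

theorem neg_floor_add_ceil_div_le_iff {d g y k : K} (hk : 0 < k) :
    -((⌊d * k⌋ : K) + ⌈g * k⌉) / k ≤ y ↔ -⌊y * k⌋ - ⌊d * k⌋ ≤ ⌈g * k⌉ := by
  rw [div_le_iff₀ hk,
    show -⌊y * k⌋ - ⌊d * k⌋ ≤ ⌈g * k⌉ ↔ -⌊d * k⌋ - ⌈g * k⌉ ≤ ⌊y * k⌋ by omega, Int.le_floor]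
  push_cast
  constructor <;> intro h <;> linarith

theorem neg_one_add_floor_add_floor_div_lt_iff {d g y k : K} (hk : 0 < k) :
    -(1 + (⌊y * k⌋ : K) + ⌊d * k⌋) / k < g ↔ -⌊y * k⌋ - ⌊d * k⌋ ≤ ⌈g * k⌉ := by
  rw [div_lt_iff₀ hk,
    show -⌊y * k⌋ - ⌊d * k⌋ ≤ ⌈g * k⌉ ↔ -1 - ⌊y * k⌋ - ⌊d * k⌋ < ⌈g * k⌉ by omega, Int.lt_ceil]
  push_cast
  constructor <;> intro h <;> linarith

theorem neg_sub_lt_add_one_of_neg_floor_sub_floor_le_ceil {a b c : K}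
    (h : -⌊a⌋ - ⌊b⌋ ≤ ⌈c⌉) : -a - b < c + 1 := by
  have h' : ((-⌊a⌋ - ⌊b⌋ : ℤ) : K) ≤ ⌈c⌉ := by exact_mod_cast h
  push_cast at h'
  linarith [Int.floor_le a, Int.floor_le b, Int.ceil_lt_add_one c]

theorem neg_intCast_sub_floor_le_ceil {m : ℤ} {b c : K} (h : -m - b ≤ c) :
    -m - ⌊b⌋ ≤ ⌈c⌉ := by
  rw [show -m - ⌊b⌋ ≤ ⌈c⌉ ↔ -m - ⌈c⌉ ≤ ⌊b⌋ by omega, Int.le_floor]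
  push_cast
  linarith [Int.le_ceil c]

end FloorRing

/-- Claim 4.3 (floor version): let `y₋` be the greatest element of
`{-(⌊dk⌋ + ⌈gk⌉)/k : k > 0}`.
(i) If neither `y` nor `d` is an integer and `ŷ₋` is the greatest element of
`{-(1 + ⌊yk⌋ + ⌊dk⌋)/k : k > 0}`, then `y ≥ y₋ ↔ g > ŷ₋`.
(ii) If `y` or `d` is an integer, then `y ≥ y₋ ↔ g ≥ -y - d`. -/
theorem stmt_4 (d g y yneg : ℚ)
    (h : IsGreatest {x : ℚ | ∃ k : ℕ, 0 < k ∧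
      x = -((⌊d * (k:ℚ)⌋ : ℚ) + (⌈g * (k:ℚ)⌉ : ℚ))/(k:ℚ)} yneg) :
    ((¬∃ z : ℤ, (z:ℚ) = y) → (¬∃ z : ℤ, (z:ℚ) = d) →
      ∀ yhatneg : ℚ, IsGreatest {x : ℚ | ∃ k : ℕ, 0 < k ∧
        x = -(1 + (⌊y * (k:ℚ)⌋ : ℚ) + (⌊d * (k:ℚ)⌋ : ℚ))/(k:ℚ)} yhatneg →
      (y ≥ yneg ↔ g > yhatneg)) ∧
    (((∃ z : ℤ, (z:ℚ) = y) ∨ (∃ z : ℤ, (z:ℚ) = d)) →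
      (y ≥ yneg ↔ g ≥ -y - d)) := by
  have hyneg : yneg ≤ y ↔ ∀ k : ℕ, 0 < k → -⌊y * k⌋ - ⌊d * k⌋ ≤ ⌈g * (k:ℚ)⌉ := by
    rw [isLUB_le_iff h.isLUB, mem_upperBounds, forall_mem_setOf_exists_eq]
    exact forall₂_congr fun k hk => neg_floor_add_ceil_div_le_iff (Nat.cast_pos.2 hk)
  refine ⟨fun _ _ yhatneg hhat => ?_, fun hint => ?_⟩
  · rw [ge_iff_le, hyneg, gt_iff_lt, hhat.lt_iff, forall_mem_setOf_exists_eq]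
    exact forall₂_congr fun k hk =>
      (neg_one_add_floor_add_floor_div_lt_iff (Nat.cast_pos.2 hk)).symm
  rw [ge_iff_le, hyneg, ge_iff_le]
  refine ⟨fun hall => le_of_forall_nat_mul_lt_add_one fun k hk => ?_, fun hg k hk => ?_⟩
  · have := neg_sub_lt_add_one_of_neg_floor_sub_floor_le_ceil (hall k hk)
    linarith
  have hgk : -(y * k) - d * k ≤ g * k := by nlinarith [(Nat.cast_pos (α := ℚ)).2 hk]
  rcases hint with ⟨m, rfl⟩ | ⟨m, rfl⟩
  · rw [← Int.cast_natCast, ← Int.cast_mul, Int.floor_intCast]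
    exact neg_intCast_sub_floor_le_ceil (by push_cast; linarith)
  · rw [← Int.cast_natCast, ← Int.cast_mul, Int.floor_intCast, neg_sub_comm]
    exact neg_intCast_sub_floor_le_ceil (by push_cast; linarith)
end

section
/- Let d, g, y be rational numbers and suppose y₊ ∈ ℚ is the least element of the set { −(⌈d·k⌉ + ⌊g·k⌋)/k : k a positive integer }. (i) If neither y nor d is an integer, and ŷ₊ ∈ ℚ is the least element of the set { −(−1 + ⌈y·k⌉ + ⌈d·k⌉)/k : k a positive integer }, then y ≤ y₊ if and only if g < ŷ₊. (ii) If y is an integer or d is an integer, then y ≤ y₊ if and only if g ≤ −y − d. -/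
/-!
Both sets are indexed by `k > 0`, and after clearing the denominator `k` each of the
comparisons `y ≤ -(⌈dk⌉ + ⌊gk⌋)/k` and `g < -(-1 + ⌈yk⌉ + ⌈dk⌉)/k` becomes the same integer
inequality `⌈yk⌉ + ⌈dk⌉ + ⌊gk⌋ ≤ 0`; since both least elements are attained, `y ≤ y₊` and
`g < ŷ₊` are each equivalent to this inequality holding for every `k`. When `y` or `d` is an
integer the two ceilings merge into `⌈(y + d)k⌉`, and then the inequality holds for all `k` exactly
when `g ≤ -(y + d)`: one direction is monotonicity of the floor, the other an Archimedean
argument, as `(y + d + g)k < 1` for all `k`.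
-/

theorem forall_mem_setOf_exists_pos_eq_iff {α : Type*} (F : ℕ → α) (P : α → Prop) :
    (∀ x ∈ {x | ∃ k : ℕ, 0 < k ∧ x = F k}, P x) ↔ ∀ k : ℕ, 0 < k → P (F k) := by
  simp only [Set.mem_ofPred_eq, forall_exists_index, and_imp]
  exact ⟨fun H k hk => H _ k hk rfl, fun H _ k hk hx => hx ▸ H k hk⟩

section FloorRing

variable {K : Type*} [Field K] [LinearOrder K] [IsStrictOrderedRing K] [FloorRing K]

theorem le_neg_ceil_add_floor_div_iff (y d g : K) {k : ℕ} (hk : 0 < k) :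
    y ≤ -((⌈d * k⌉ : K) + ⌊g * k⌋) / k ↔ ⌈y * k⌉ + ⌈d * k⌉ + ⌊g * k⌋ ≤ 0 := by
  have hm : -((⌈d * k⌉ : K) + ⌊g * k⌋) = ((-(⌈d * k⌉ + ⌊g * k⌋) : ℤ) : K) := by push_cast; ring
  rw [le_div_iff₀ (by exact_mod_cast hk), hm, ← Int.ceil_le]
  omega

theorem lt_neg_ceil_add_ceil_sub_one_div_iff (y d g : K) {k : ℕ} (hk : 0 < k) :
    g < -(-1 + (⌈y * k⌉ : K) + ⌈d * k⌉) / k ↔ ⌈y * k⌉ + ⌈d * k⌉ + ⌊g * k⌋ ≤ 0 := by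
  have hm : -(-1 + (⌈y * k⌉ : K) + ⌈d * k⌉) = ((1 - ⌈y * k⌉ - ⌈d * k⌉ : ℤ) : K) := by
    push_cast; ring
  rw [lt_div_iff₀ (by exact_mod_cast hk), hm, ← Int.floor_lt]
  omega

theorem ceil_intCast_mul_add_ceil_mul (z : ℤ) (d : K) (k : ℕ) :
    ⌈(z : K) * k⌉ + ⌈d * k⌉ = ⌈(z + d) * k⌉ := by
  rw [add_mul, ← Int.cast_natCast, ← Int.cast_mul, Int.ceil_intCast, Int.ceil_intCast_add]

theorem forall_ceil_mul_add_floor_mul_nonpos_iff [Archimedean K] (e g : K) :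
    (∀ k : ℕ, 0 < k → ⌈e * k⌉ + ⌊g * k⌋ ≤ 0) ↔ g ≤ -e := by
  constructor
  · intro hall
    by_contra! hlt
    obtain ⟨n, hn⟩ := Archimedean.arch (1 : K) (by linarith : 0 < e + g)
    rw [nsmul_eq_mul] at hn
    have hn0 : 0 < n := Nat.pos_of_ne_zero (by rintro rfl; norm_num at hn)
    have hsum : ((⌈e * n⌉ + ⌊g * n⌋ : ℤ) : K) ≤ 0 := by exact_mod_cast hall n hn0
    push_cast at hsum
    linarith [Int.le_ceil (e * n), Int.sub_one_lt_floor (g * n)]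
  · intro hg k _
    have hfloor : ⌊g * k⌋ ≤ ⌊-e * k⌋ := Int.floor_mono (by gcongr)
    rw [neg_mul, Int.floor_neg] at hfloor
    omega

end FloorRing

/-- Claim 4.3 (ceiling version): let `y₊` be the least element of
`{-(⌈dk⌉ + ⌊gk⌋)/k : k > 0}`.
(i) If neither `y` nor `d` is an integer and `ŷ₊` is the least element of
`{-(-1 + ⌈yk⌉ + ⌈dk⌉)/k : k > 0}`, then `y ≤ y₊ ↔ g < ŷ₊`.
(ii) If `y` or `d` is an integer, then `y ≤ y₊ ↔ g ≤ -y - d`. -/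
theorem stmt_5 (d g y ypos : ℚ)
    (h : IsLeast {x : ℚ | ∃ k : ℕ, 0 < k ∧
      x = -((⌈d * (k:ℚ)⌉ : ℚ) + (⌊g * (k:ℚ)⌋ : ℚ))/(k:ℚ)} ypos) :
    ((¬∃ z : ℤ, (z:ℚ) = y) → (¬∃ z : ℤ, (z:ℚ) = d) →
      ∀ yhatpos : ℚ, IsLeast {x : ℚ | ∃ k : ℕ, 0 < k ∧
        x = -(-1 + (⌈y * (k:ℚ)⌉ : ℚ) + (⌈d * (k:ℚ)⌉ : ℚ))/(k:ℚ)} yhatpos →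
      (y ≤ ypos ↔ g < yhatpos)) ∧
    (((∃ z : ℤ, (z:ℚ) = y) ∨ (∃ z : ℤ, (z:ℚ) = d)) →
      (y ≤ ypos ↔ g ≤ -y - d)) := by
  have hy : y ≤ ypos ↔ ∀ k : ℕ, 0 < k → ⌈y * k⌉ + ⌈d * k⌉ + ⌊g * k⌋ ≤ 0 := by
    rw [le_isGLB_iff h.isGLB, mem_lowerBounds, forall_mem_setOf_exists_pos_eq_iff]
    exact forall₂_congr fun k hk => le_neg_ceil_add_floor_div_iff y d g hk
  refine ⟨fun _ _ yhatpos hhat => ?_, fun hint => ?_⟩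
  · rw [hy, hhat.lt_iff, forall_mem_setOf_exists_pos_eq_iff]
    exact forall₂_congr fun k hk => (lt_neg_ceil_add_ceil_sub_one_div_iff y d g hk).symm
  · have hmerge : ∀ k : ℕ, ⌈y * k⌉ + ⌈d * k⌉ = ⌈(y + d) * k⌉ := by
      rcases hint with ⟨z, rfl⟩ | ⟨z, rfl⟩
      · exact ceil_intCast_mul_add_ceil_mul z d
      · exact fun k => by rw [add_comm, add_comm y, ceil_intCast_mul_add_ceil_mul z y]
    simp only [hy, hmerge, forall_ceil_mul_add_floor_mul_nonpos_iff, neg_add']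
end

section
/- Let d and g be rational numbers and suppose y₋ ∈ ℚ is the greatest element of the set { −(⌊d·k⌋ + ⌈g·k⌉)/k : k a positive integer }. Then −d − g ≤ y₋ ≤ −⌊d + g⌋, and moreover y₋ = −d − g if and only if d is an integer or d + g is an integer. -/
/-- The generic element of the set, rewritten via fractional parts. -/
private lemma elt_form (d g : ℚ) (k : ℕ) (hk : 0 < k) :
    -((⌊d * (k:ℚ)⌋ : ℚ) + (⌈g * (k:ℚ)⌉ : ℚ))/(k:ℚ)
      = -(d+g) + (Int.fract (d*k) - Int.fract (-(g*k)))/k := by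
  have hk' : (k:ℚ) ≠ 0 := by positivity
  have h1 : (⌊d*(k:ℚ)⌋ : ℚ) = d*k - Int.fract (d*k) := by
    rw [← Int.self_sub_fract]
  have h2 : (⌈g*(k:ℚ)⌉ : ℚ) = g*k + Int.fract (-(g*k)) := by
    have : (⌊-(g*(k:ℚ))⌋ : ℚ) = -(g*k) - Int.fract (-(g*k)) := by
      rw [← Int.self_sub_fract]
    have hfl : ⌊-(g*(k:ℚ))⌋ = -⌈g*(k:ℚ)⌉ := Int.floor_neg
    rw [hfl] at this
    push_cast at this
    linarith
  have key : -((⌊d*(k:ℚ)⌋:ℚ) + (⌈g*(k:ℚ)⌉:ℚ))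
      = (-(d+g))*k + (Int.fract (d*k) - Int.fract (-(g*k))) := by
    rw [h1, h2]; ring
  rw [key, add_div, mul_div_cancel_right₀ _ hk']

/-- `d * (d.den * n)` is an integer. -/
private lemma mul_den_int (d : ℚ) (n : ℕ) :
    d * ((d.den * n : ℕ) : ℚ) = ((d.num * n : ℤ) : ℚ) := by
  push_cast
  rw [← mul_assoc, Rat.mul_den_eq_num]

private lemma fract_ne_int {q : ℚ} (hq : Int.fract q ≠ 0) (z : ℤ) : (z:ℚ) ≠ q := by
  intro hz
  apply hq
  rw [← hz, Int.fract_intCast]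

/-- Claim 4.4 (first part): if `y₋` is the greatest element of
`{-(⌊dk⌋ + ⌈gk⌉)/k : k > 0}`, then `-d - g ≤ y₋ ≤ -⌊d + g⌋`, with
`y₋ = -d - g` iff `d ∈ ℤ` or `d + g ∈ ℤ`. -/
theorem stmt_6 (d g yneg : ℚ)
    (h : IsGreatest {x : ℚ | ∃ k : ℕ, 0 < k ∧
      x = -((⌊d * (k:ℚ)⌋ : ℚ) + (⌈g * (k:ℚ)⌉ : ℚ))/(k:ℚ)} yneg) :
    -d - g ≤ yneg ∧ yneg ≤ -(⌊d + g⌋ : ℚ) ∧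
      (yneg = -d - g ↔ ((∃ z : ℤ, (z:ℚ) = d) ∨ (∃ z : ℤ, (z:ℚ) = d + g))) := by
  obtain ⟨⟨k₀, hk₀, hy⟩, hub⟩ := h
  have hk₀' : (0:ℚ) < (k₀:ℚ) := by exact_mod_cast hk₀
  -- Lower bound, via k = common denominator
  have hMpos : 0 < d.den * g.den := Nat.mul_pos d.pos g.pos
  have hdM : d * ((d.den * g.den : ℕ) : ℚ) = ((d.num * g.den : ℤ) : ℚ) := mul_den_int d g.den
  have hgM : g * ((d.den * g.den : ℕ) : ℚ) = ((g.num * d.den : ℤ) : ℚ) := by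
    rw [show ((d.den * g.den : ℕ) : ℚ) = ((g.den * d.den : ℕ) : ℚ) by push_cast; ring]
    exact mul_den_int g d.den
  have hlow : -d - g ≤ yneg := by
    have hmem := hub ⟨d.den * g.den, hMpos, rfl⟩
    rw [elt_form d g _ hMpos, hdM] at hmem
    rw [show -(g * ((d.den * g.den : ℕ) : ℚ)) = ((-(g.num * d.den) : ℤ) : ℚ) by
      rw [hgM]; push_cast; ring] at hmem
    rw [Int.fract_intCast, Int.fract_intCast] at hmem
    simp at hmem
    linarith
  refine ⟨hlow, ?_, ?_⟩
  · -- upper bound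
    have i1 : ⌊d + g⌋ * (k₀:ℤ) ≤ ⌊(d+g) * (k₀:ℚ)⌋ := by
      rw [Int.le_floor]
      push_cast
      nlinarith [Int.floor_le (d+g)]
    have i2 : ⌊(d+g) * (k₀:ℚ)⌋ ≤ ⌊d * (k₀:ℚ) + ((⌈g * (k₀:ℚ)⌉ : ℤ) : ℚ)⌋ := by
      apply Int.floor_le_floor
      nlinarith [Int.le_ceil (g * (k₀:ℚ))]
    have i3 : ⌊d * (k₀:ℚ) + ((⌈g * (k₀:ℚ)⌉ : ℤ) : ℚ)⌋ = ⌊d * (k₀:ℚ)⌋ + ⌈g * (k₀:ℚ)⌉ :=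
      Int.floor_add_intCast _ _
    have ile : ⌊d + g⌋ * (k₀:ℤ) ≤ ⌊d * (k₀:ℚ)⌋ + ⌈g * (k₀:ℚ)⌉ := by omega
    have ile' : ((⌊d + g⌋ : ℚ)) * (k₀:ℚ) ≤ (⌊d * (k₀:ℚ)⌋ : ℚ) + (⌈g * (k₀:ℚ)⌉ : ℚ) := by
      exact_mod_cast ile
    rw [hy, neg_div, neg_le_neg_iff, le_div_iff₀ hk₀']
    exact ile'
  · constructor
    · -- forward direction, by contradiction
      intro heq
      by_contra hcon
      push_neg at hcon
      obtain ⟨hd, hs⟩ := hcon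
      have hfd : Int.fract d ≠ 0 := by
        intro h0
        exact hd ⌊d⌋ (by have := Int.self_sub_fract d; rw [h0] at this; linarith)
      have hfd0 : 0 < Int.fract d := lt_of_le_of_ne (Int.fract_nonneg d) (Ne.symm hfd)
      have fd_eq : Int.fract d = d - (⌊d⌋:ℚ) := by
        have := Int.self_sub_fract d; linarith
      -- find k with fract(-(g*k)) < fract(d*k)
      have claim : ∃ k : ℕ, 0 < k ∧ Int.fract (-(g * (k:ℚ))) < Int.fract (d * (k:ℚ)) := by
        by_cases hg : Int.fract g = 0
        · refine ⟨1, one_pos, ?_⟩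
          have hg' : g = ((⌊g⌋:ℤ):ℚ) := by
            have := Int.self_sub_fract g; rw [hg] at this; linarith
          have hfng : Int.fract (-(g * ((1:ℕ):ℚ))) = 0 := by
            rw [show -(g * ((1:ℕ):ℚ)) = ((-⌊g⌋ : ℤ):ℚ) by push_cast; linarith [hg'],
              Int.fract_intCast]
          rw [hfng, show d * ((1:ℕ):ℚ) = d by push_cast; ring]
          exact hfd0
        · have hfg0 : 0 < Int.fract g := lt_of_le_of_ne (Int.fract_nonneg g) (Ne.symm hg)
          have fg_eq : Int.fract g = g - (⌊g⌋:ℚ) := by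
            have := Int.self_sub_fract g; linarith
          have hne1 : Int.fract d + Int.fract g ≠ 1 := by
            intro h1
            apply hs (⌊d⌋ + ⌊g⌋ + 1)
            push_cast
            rw [fd_eq, fg_eq] at h1
            linarith
          rcases lt_or_gt_of_ne hne1 with hlt | hgt
          · -- k = M - 1
            have hden : d.den ≠ 1 := by
              intro h1
              apply hfd
              have : ((d.num : ℤ):ℚ) = d := by
                rw [Rat.den_eq_one_iff] at h1; exact_mod_cast h1
              rw [← this, Int.fract_intCast]
            have hM2 : 2 ≤ d.den * g.den := by
              have := d.pos; have := g.pos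
              have h2 : 2 ≤ d.den := by omega
              calc 2 ≤ d.den := h2
                _ ≤ d.den * g.den := Nat.le_mul_of_pos_right _ g.pos
            refine ⟨d.den * g.den - 1, by omega, ?_⟩
            have hcast : ((d.den * g.den - 1 : ℕ) : ℚ) = ((d.den * g.den : ℕ):ℚ) - 1 := by
              have : (1:ℕ) ≤ d.den * g.den := by omega
              push_cast [Nat.cast_sub this]
              ring
            have e1 : d * ((d.den * g.den - 1 : ℕ) : ℚ) = ((d.num * g.den : ℤ):ℚ) + (-d) := by
              rw [hcast, mul_sub, hdM]; ring
            have e2 : -(g * ((d.den * g.den - 1 : ℕ) : ℚ)) = ((-(g.num * d.den) : ℤ):ℚ) + g := by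
              rw [hcast, mul_sub]
              push_cast
              rw [show g * ((d.den:ℚ) * (g.den:ℚ)) = g * ((d.den * g.den : ℕ):ℚ) by push_cast; ring, hgM]
              push_cast
              ring
            rw [e1, e2, Int.fract_intCast_add, Int.fract_intCast_add, Int.fract_neg hfd]
            linarith
          · -- k = 1
            refine ⟨1, one_pos, ?_⟩
            rw [show -(g * ((1:ℕ):ℚ)) = -g by push_cast; ring,
              show d * ((1:ℕ):ℚ) = d by push_cast; ring, Int.fract_neg hg]
            linarith
      obtain ⟨k, hk, hklt⟩ := claim
      have hmem := hub ⟨k, hk, rfl⟩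
      rw [elt_form d g k hk] at hmem
      have hkpos : (0:ℚ) < (k:ℚ) := by exact_mod_cast hk
      have : 0 < (Int.fract (d * (k:ℚ)) - Int.fract (-(g * (k:ℚ)))) / (k:ℚ) := by
        apply div_pos (by linarith) hkpos
      rw [heq] at hmem
      linarith
    · -- backward direction
      intro hcase
      refine le_antisymm ?_ hlow
      rcases hcase with ⟨z, hz⟩ | ⟨z, hz⟩
      · have hF1 : Int.fract (d * (k₀:ℚ)) = 0 := by
          rw [show d * (k₀:ℚ) = ((z * k₀ : ℤ):ℚ) by push_cast; rw [hz]]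
          exact Int.fract_intCast _
        have hF2 : 0 ≤ Int.fract (-(g * (k₀:ℚ))) := Int.fract_nonneg _
        rw [hy, elt_form d g k₀ hk₀, hF1]
        have : (0 - Int.fract (-(g * (k₀:ℚ)))) / (k₀:ℚ) ≤ 0 :=
          div_nonpos_of_nonpos_of_nonneg (by linarith) (le_of_lt hk₀')
        linarith
      · have hEq : Int.fract (-(g * (k₀:ℚ))) = Int.fract (d * (k₀:ℚ)) := by
          rw [show -(g * (k₀:ℚ)) = d * (k₀:ℚ) - ((z * k₀ : ℤ):ℚ) by
            push_cast; linear_combination (k₀:ℚ) * hz]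
          exact Int.fract_sub_intCast _ _
        rw [hy, elt_form d g k₀ hk₀, hEq, sub_self, zero_div, add_zero]
        ring_nf
        linarith
end

section
/- Let d and g be rational numbers and suppose y₊ ∈ ℚ is the least element of the set { −(⌈d·k⌉ + ⌊g·k⌋)/k : k a positive integer }. Then −⌈d + g⌉ ≤ y₊ ≤ −d − g, and moreover y₊ = −d − g if and only if d is an integer or d + g is an integer. -/
/-- Claim 4.4 (second part): if `y₊` is the least element of
`{-(⌈dk⌉ + ⌊gk⌋)/k : k > 0}`, then `-⌈d + g⌉ ≤ y₊ ≤ -d - g`, with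
`y₊ = -d - g` iff `d ∈ ℤ` or `d + g ∈ ℤ`. -/
theorem stmt_7 (d g ypos : ℚ)
    (h : IsLeast {x : ℚ | ∃ k : ℕ, 0 < k ∧
      x = -((⌈d * (k:ℚ)⌉ : ℚ) + (⌊g * (k:ℚ)⌋ : ℚ))/(k:ℚ)} ypos) :
    -(⌈d + g⌉ : ℚ) ≤ ypos ∧ ypos ≤ -d - g ∧
      (ypos = -d - g ↔ ((∃ z : ℤ, (z:ℚ) = d) ∨ (∃ z : ℤ, (z:ℚ) = d + g))) := by
  obtain ⟨⟨k₀, hk₀, hy₀⟩, hlb⟩ := h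
  have hk₀' : (0:ℚ) < k₀ := by exact_mod_cast hk₀
  have elem : ∀ k : ℕ, 0 < k →
      ypos ≤ -((⌈d * (k:ℚ)⌉ : ℚ) + (⌊g * (k:ℚ)⌋ : ℚ))/(k:ℚ) :=
    fun k hk => hlb ⟨k, hk, rfl⟩
  -- Part 1 : -⌈d+g⌉ ≤ ypos
  have part1 : -(⌈d + g⌉ : ℚ) ≤ ypos := by
    rw [hy₀, neg_div, neg_le_neg_iff, div_le_iff₀ hk₀']
    have h1 : (⌈d * (k₀:ℚ)⌉ : ℚ) < d * k₀ + 1 := Int.ceil_lt_add_one _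
    have h2 : (⌊g * (k₀:ℚ)⌋ : ℚ) ≤ g * k₀ := Int.floor_le _
    have h3 : (d + g) * k₀ ≤ (⌈d + g⌉ : ℚ) * k₀ :=
      mul_le_mul_of_nonneg_right (Int.le_ceil _) (le_of_lt hk₀')
    have h4 : (⌈d * (k₀:ℚ)⌉ : ℚ) + (⌊g * (k₀:ℚ)⌋ : ℚ) <
        (⌈d + g⌉ : ℚ) * k₀ + 1 := by push_cast; nlinarith
    have h5 : ⌈d * (k₀:ℚ)⌉ + ⌊g * (k₀:ℚ)⌋ < ⌈d + g⌉ * (k₀:ℤ) + 1 := by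
      exact_mod_cast h4
    have h6 : ⌈d * (k₀:ℚ)⌉ + ⌊g * (k₀:ℚ)⌋ ≤ ⌈d + g⌉ * (k₀:ℤ) :=
      Int.lt_add_one_iff.mp h5
    exact_mod_cast h6
  -- Part 2 : ypos ≤ -d - g
  have part2 : ypos ≤ -d - g := by
    by_contra hc
    push_neg at hc
    have hε : (0:ℚ) < ypos + d + g := by linarith
    obtain ⟨n, hn⟩ := exists_nat_gt (1 / (ypos + d + g))
    have hn0' : (0:ℚ) < n := lt_trans (one_div_pos.mpr hε) hn
    have hn0 : 0 < n := by exact_mod_cast hn0'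
    have h1 : 1 < (n:ℚ) * (ypos + d + g) := (div_lt_iff₀ hε).mp hn
    have h2 := elem n hn0
    rw [neg_div, le_neg, div_le_iff₀ hn0'] at h2
    have h3 : d * n ≤ (⌈d * (n:ℚ)⌉ : ℚ) := Int.le_ceil _
    have h4 : g * n - 1 < (⌊g * (n:ℚ)⌋ : ℚ) := Int.sub_one_lt_floor _
    nlinarith
  refine ⟨part1, part2, ?_, ?_⟩
  · -- forward direction
    intro heq
    have key : ∀ k : ℕ, 0 < k →
        (⌈d * (k:ℚ)⌉ : ℚ) + (⌊g * (k:ℚ)⌋ : ℚ) ≤ (d + g) * k := by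
      intro k hk
      have hk' : (0:ℚ) < k := by exact_mod_cast hk
      have := elem k hk
      rw [heq, neg_div, le_neg, div_le_iff₀ hk'] at this
      have h3 : -(-d - g) * (k:ℚ) = (d + g) * k := by ring
      linarith
    by_cases hd : ∃ z : ℤ, (z:ℚ) = d
    · exact Or.inl hd
    right
    have hdfl : (⌊d⌋ : ℚ) < d := by
      rcases lt_or_eq_of_le (Int.floor_le d) with h' | h'
      · exact h'
      · exact absurd ⟨⌊d⌋, h'⟩ hd
    have hdcl : d < (⌈d⌉ : ℚ) := by
      rcases lt_or_eq_of_le (Int.le_ceil d) with h' | h'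
      · exact h'
      · exact absurd ⟨⌈d⌉, h'.symm⟩ hd
    have hceil_d : (⌈d⌉ : ℚ) = (⌊d⌋ : ℚ) + 1 := by
      have h1 : ⌈d⌉ ≤ ⌊d⌋ + 1 := Int.ceil_le_floor_add_one d
      have h2 : ⌊d⌋ < ⌈d⌉ := by exact_mod_cast hdfl.trans hdcl
      have : ⌈d⌉ = ⌊d⌋ + 1 := le_antisymm h1 h2
      exact_mod_cast this
    have key1 : (⌈d⌉ : ℚ) + (⌊g⌋ : ℚ) ≤ d + g := by
      have := key 1 one_pos
      simpa using this
    -- g is not an integer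
    have hg : ¬ ∃ z : ℤ, (z:ℚ) = g := by
      rintro ⟨z, hz⟩
      have : (⌊g⌋ : ℚ) = g := by rw [← hz, Int.floor_intCast]
      exact absurd ⟨⌈d⌉, by linarith⟩ hd
    have hgfl : (⌊g⌋ : ℚ) < g := by
      rcases lt_or_eq_of_le (Int.floor_le g) with h' | h'
      · exact h'
      · exact absurd ⟨⌊g⌋, h'⟩ hg
    have hgcl : g < (⌈g⌉ : ℚ) := by
      rcases lt_or_eq_of_le (Int.le_ceil g) with h' | h'
      · exact h'
      · exact absurd ⟨⌈g⌉, h'.symm⟩ hg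
    have hceil_g : (⌈g⌉ : ℚ) = (⌊g⌋ : ℚ) + 1 := by
      have h1 : ⌈g⌉ ≤ ⌊g⌋ + 1 := Int.ceil_le_floor_add_one g
      have h2 : ⌊g⌋ < ⌈g⌉ := by exact_mod_cast hgfl.trans hgcl
      have : ⌈g⌉ = ⌊g⌋ + 1 := le_antisymm h1 h2
      exact_mod_cast this
    -- denominator of g
    set r := g.den with hrdef
    have hr1 : r ≠ 1 := by
      intro h1
      exact hg ⟨g.num, (Rat.den_eq_one_iff g).mp h1⟩
    have hr0 : 0 < r := g.pos
    have hr2 : 2 ≤ r := by omega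
    have hgr : g * (r:ℚ) = (g.num : ℚ) := by
      exact_mod_cast Rat.mul_den_eq_num g
    -- from key r : d * r is an integer
    have hkeyr := key r hr0
    have hfl_gr : (⌊g * (r:ℚ)⌋ : ℚ) = g * r := by
      rw [hgr, Int.floor_intCast]
    have hdr_le : (⌈d * (r:ℚ)⌉ : ℚ) ≤ d * r := by
      have : (d + g) * r = d * r + g * r := by ring
      rw [this, hfl_gr] at hkeyr
      linarith
    have hdr : (⌈d * (r:ℚ)⌉ : ℚ) = d * r := le_antisymm hdr_le (Int.le_ceil _)
    -- from key (r-1)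
    have hrm1 : 0 < r - 1 := by omega
    have hcast : ((r - 1 : ℕ) : ℚ) = (r:ℚ) - 1 := by
      push_cast [Nat.cast_sub (by omega : 1 ≤ r)]; ring
    have hkeyrm := key (r-1) hrm1
    rw [hcast] at hkeyrm
    have hd_expr : d * ((r:ℚ) - 1) = (⌈d * (r:ℚ)⌉ : ℚ) - d := by
      rw [hdr]; ring
    have hg_expr : g * ((r:ℚ) - 1) = (g.num : ℚ) - g := by
      rw [← hgr]; ring
    have hceil_rm : (⌈d * ((r:ℚ) - 1)⌉ : ℚ) = (⌈d * (r:ℚ)⌉ : ℚ) - (⌊d⌋ : ℚ) := by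
      rw [hd_expr]
      have : ((⌈d * (r:ℚ)⌉ : ℚ) - d) = -d + (⌈d * (r:ℚ)⌉ : ℤ) := by push_cast; ring
      rw [this, Int.ceil_add_intCast, Int.ceil_neg]
      push_cast; ring
    have hfl_rm : (⌊g * ((r:ℚ) - 1)⌋ : ℚ) = (g.num : ℚ) - (⌈g⌉ : ℚ) := by
      rw [hg_expr]
      have : ((g.num : ℚ) - g) = -g + (g.num : ℤ) := by push_cast; ring
      rw [this, Int.floor_add_intCast, Int.floor_neg]
      push_cast; ring
    rw [hceil_rm, hfl_rm] at hkeyrm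
    -- (d+g)*(r-1) = d*r + g*r - (d+g)
    have hrhs : (d + g) * ((r:ℚ) - 1) =
        (⌈d * (r:ℚ)⌉ : ℚ) + (g.num : ℚ) - (d + g) := by
      rw [hdr, ← hgr]; ring
    rw [hrhs] at hkeyrm
    -- now : d + g ≤ ⌊d⌋ + ⌈g⌉, and from key1 : ⌊d⌋ + ⌈g⌉ ≤ d + g
    refine ⟨⌊d⌋ + ⌈g⌉, ?_⟩
    push_cast
    have hle1 : (⌊d⌋ : ℚ) + (⌈g⌉ : ℚ) ≤ d + g := by
      linarith [key1, hceil_d, hceil_g]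
    linarith
  · -- reverse direction
    intro hcase
    have hge : (⌈d * (k₀:ℚ)⌉ : ℚ) + (⌊g * (k₀:ℚ)⌋ : ℚ) ≤ (d + g) * k₀ := by
      rcases hcase with ⟨z, hz⟩ | ⟨z, hz⟩
      · have hcl : (⌈d * (k₀:ℚ)⌉ : ℚ) = d * k₀ := by
          rw [← hz, show ((z:ℚ) * (k₀:ℚ)) = ((z * (k₀:ℤ) : ℤ) : ℚ) by push_cast; ring,
            Int.ceil_intCast]
        rw [hcl]
        have := Int.floor_le (g * (k₀:ℚ))
        nlinarith
      · have hgk : g * (k₀:ℚ) = -(d * k₀) + ((z * (k₀:ℤ) : ℤ) : ℚ) := by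
          push_cast
          have : g = (z:ℚ) - d := by linarith [hz]
          rw [this]; ring
        have hfl : (⌊g * (k₀:ℚ)⌋ : ℚ) = ((z * (k₀:ℤ) : ℤ) : ℚ) - (⌈d * (k₀:ℚ)⌉ : ℚ) := by
          rw [hgk, Int.floor_add_intCast, Int.floor_neg]
          push_cast; ring
        rw [hfl]
        have : (d + g) * k₀ = ((z * (k₀:ℤ) : ℤ) : ℚ) := by
          push_cast
          nlinarith [hz]
        rw [this]
        ring_nf
        linarith
    have hge2 : -d - g ≤ ypos := by
      rw [hy₀, neg_div, le_neg]
      have h2 : -(-d - g) = d + g := by ring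
      rw [h2, div_le_iff₀ hk₀']
      exact hge
    linarith
end

section
/- Let n and m be natural numbers and let d_1,…,d_n, g_1,…,g_m be rational numbers; assume that m ≥ 1 or that at least two of the d_i are not integers. For every positive integer k set f(k) := −(1/k)·(1 + Σ_{i=1}^{n} ⌊d_i·k⌋ + Σ_{j=1}^{m} (⌈g_j·k⌉ − 1)). Suppose y₋ ∈ ℚ is the greatest element of the set { f(k) : k a positive integer }, and let k₋ be the least positive integer with f(k₋) = y₋. Then k₋ is the denominator of y₋, i.e., k₋ is the least positive integer k such that k·y₋ is an integer. -/
/-- Proposition 4.5 (left-hand endpoint): assuming the manifold is not a solid torus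
(`m ≥ 1` or at least two `dᵢ` non-integral), if `y₋` is the greatest element of
`{f k : k > 0}` with `f k = -(1/k)(1 + Σ⌊dᵢk⌋ + Σ(⌈gⱼk⌉-1))`, then the least positive
`k` with `f k = y₋` is the denominator of `y₋`. -/
theorem stmt_8 (n m : ℕ) (d : Fin n → ℚ) (g : Fin m → ℚ)
    (hnst : 1 ≤ m ∨ ∃ i j : Fin n, i ≠ j ∧
      (¬∃ z : ℤ, (z:ℚ) = d i) ∧ (¬∃ z : ℤ, (z:ℚ) = d j))
    (f : ℕ → ℚ)
    (hf : ∀ k : ℕ, 0 < k →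
      f k = -(1/(k:ℚ)) * (1 + (∑ i, (⌊d i * (k:ℚ)⌋ : ℚ))
        + ∑ j, ((⌈g j * (k:ℚ)⌉ : ℚ) - 1)))
    (yneg : ℚ)
    (hy : IsGreatest {x : ℚ | ∃ k : ℕ, 0 < k ∧ x = f k} yneg)
    (kneg : ℕ)
    (hk : IsLeast {k : ℕ | 0 < k ∧ f k = yneg} kneg) :
    IsLeast {k : ℕ | 0 < k ∧ ∃ z : ℤ, (z:ℚ) = (k:ℚ) * yneg} kneg := by
  obtain ⟨⟨hk0, hkf⟩, hkmin⟩ := hk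
  obtain ⟨-, hyub⟩ := hy
  set N : ℕ → ℤ := fun k =>
    1 + (∑ i, ⌊d i * (k:ℚ)⌋) + ∑ j, (⌈g j * (k:ℚ)⌉ - 1) with hN
  have hNf : ∀ k : ℕ, 0 < k → (k:ℚ) * f k = -(N k) := by
    intro k hkp
    have hk' : (k:ℚ) ≠ 0 := Nat.cast_ne_zero.mpr hkp.ne'
    rw [hf k hkp, hN]
    push_cast
    field_simp
  have hle : ∀ k : ℕ, 0 < k → f k ≤ yneg := fun k hkp => hyub ⟨k, hkp, rfl⟩
  have hsuper : ∀ a b : ℕ, N a + N b - 1 ≤ N (a + b) := by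
    intro a b
    have hfl : ∀ i : Fin n, ⌊d i * (a:ℚ)⌋ + ⌊d i * (b:ℚ)⌋ ≤ ⌊d i * ((a+b:ℕ):ℚ)⌋ := by
      intro i
      apply Int.le_floor.mpr
      push_cast
      rw [mul_add]
      exact add_le_add (Int.floor_le _) (Int.floor_le _)
    have hcl : ∀ j : Fin m, (⌈g j * (a:ℚ)⌉ - 1) + (⌈g j * (b:ℚ)⌉ - 1)
        ≤ ⌈g j * ((a+b:ℕ):ℚ)⌉ - 1 := by
      intro j
      have h := Int.ceil_add_ceil_le (g j * (a:ℚ)) (g j * (b:ℚ))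
      have e : g j * ((a+b:ℕ):ℚ) = g j * (a:ℚ) + g j * (b:ℚ) := by push_cast; ring
      rw [e]; omega
    simp only [hN]
    have h1 : (∑ i, ⌊d i * (a:ℚ)⌋) + (∑ i, ⌊d i * (b:ℚ)⌋) ≤ ∑ i, ⌊d i * ((a+b:ℕ):ℚ)⌋ := by
      rw [← Finset.sum_add_distrib]
      exact Finset.sum_le_sum fun i _ => hfl i
    have h2 : (∑ j, (⌈g j * (a:ℚ)⌉ - 1)) + (∑ j, (⌈g j * (b:ℚ)⌉ - 1))
        ≤ ∑ j, (⌈g j * ((a+b:ℕ):ℚ)⌉ - 1) := by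
      rw [← Finset.sum_add_distrib]
      exact Finset.sum_le_sum fun j _ => hcl j
    omega
  constructor
  · refine ⟨hk0, ⟨-(N kneg), ?_⟩⟩
    rw [← hkf, hNf kneg hk0]
    push_cast
    ring
  · rintro k ⟨hkp, z, hz⟩
    by_contra hlt
    push_neg at hlt
    have hkk : k < kneg := hlt
    -- f k < yneg strictly
    have hfk_ne : f k ≠ yneg := fun h => absurd (hkmin ⟨hkp, h⟩) (by omega)
    have hfk_lt : f k < yneg := lt_of_le_of_ne (hle k hkp) hfk_ne
    -- so N k ≥ 1 - z where z = k * yneg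
    have hkQ : (0:ℚ) < (k:ℚ) := by exact_mod_cast hkp
    have h1 : (-(N k) : ℚ) < (z:ℚ) := by
      rw [hz, ← hNf k hkp]
      exact (mul_lt_mul_iff_right₀ hkQ).mpr hfk_lt
    have h1' : -(N k) < z := by exact_mod_cast h1
    -- N kneg = -(kneg * yneg)
    set k' := kneg - k with hk'
    have hk'p : 0 < k' := by omega
    have hkadd : k + k' = kneg := by omega
    have hsum := hsuper k k'
    rw [hkadd] at hsum
    -- (N kneg : ℚ) = -(kneg * yneg)
    have hNkneg : ((N kneg : ℚ)) = -((kneg:ℚ) * yneg) := by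
      rw [← hkf, hNf kneg hk0]; ring
    -- deduce f k' ≥ yneg
    have hNk' : ((N k' : ℚ)) ≤ -((k':ℚ) * yneg) := by
      have hNk'le : N k' ≤ N kneg + z := by omega
      have : ((N k' : ℚ)) ≤ (N kneg : ℚ) + (z:ℚ) := by exact_mod_cast hNk'le
      rw [hNkneg] at this
      have hc : (k:ℚ) + (k':ℚ) = (kneg:ℚ) := by exact_mod_cast hkadd
      have he : (k':ℚ) * yneg = (kneg:ℚ) * yneg - (k:ℚ) * yneg := by
        rw [← hc]; ring
      rw [he]
      linarith [hz]
    have hk'Q : (0:ℚ) < (k':ℚ) := by exact_mod_cast hk'p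
    have hge : yneg ≤ f k' := by
      have := hNf k' hk'p
      nlinarith [hNk', this]
    have heq : f k' = yneg := le_antisymm (hle k' hk'p) hge
    have := hkmin ⟨hk'p, heq⟩
    omega
end

section
/- Let n and m be natural numbers and let d_1,…,d_n, g_1,…,g_m be rational numbers; assume that m ≥ 1 or that at least two of the d_i are not integers. For every positive integer k set f(k) := −(1/k)·(−1 + Σ_{i=1}^{n} ⌈d_i·k⌉ + Σ_{j=1}^{m} (⌊g_j·k⌋ + 1)). Suppose y₊ ∈ ℚ is the least element of the set { f(k) : k a positive integer }, and let k₊ be the least positive integer with f(k₊) = y₊. Then k₊ is the denominator of y₊, i.e., k₊ is the least positive integer k such that k·y₊ is an integer. -/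
/-!
Write `S k = Σ ⌈dᵢ k⌉ + Σ (⌊gⱼ k⌋ + 1)`, so that `k f(k) = 1 - S k`. Each summand of `S` is
submultiplicative, `S (q t) ≤ t S q`. Let `q` be the denominator of `y₊`. Since
`k₊ y₊ = 1 - S k₊` is an integer, `k₊ = q t`; then `t y₊.num = 1 - S (q t) ≥ 1 - t S q` forces
the integer `1 - S q = q f(q)` to be at most `y₊.num = q y₊`. Hence `f(q) = y₊` and `k₊ ≤ q`,
while `q` divides every `k` with `k y₊ ∈ ℤ`.
-/

theorem Rat.den_dvd_of_intCast_eq_mul {y : ℚ} {k : ℕ} {z : ℤ} (hz : (z : ℚ) = k * y) :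
    y.den ∣ k := by
  rcases eq_or_ne k 0 with rfl | hk
  · exact dvd_zero _
  have hy : y = Rat.divInt z k := by
    rw [Rat.divInt_eq_div, hz]
    push_cast
    field_simp
  exact_mod_cast hy ▸ Rat.den_dvd z k

section FloorCeil

variable {R : Type*} [Field R] [LinearOrder R] [IsStrictOrderedRing R] [FloorRing R]

theorem Int.ceil_mul_natCast_le (x : R) (t : ℕ) : ⌈x * t⌉ ≤ ⌈x⌉ * t := by
  rw [Int.ceil_le]
  push_cast
  exact mul_le_mul_of_nonneg_right (Int.le_ceil x) t.cast_nonneg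

theorem Int.floor_mul_natCast_add_one_le (x : R) {t : ℕ} (ht : 0 < t) :
    ⌊x * t⌋ + 1 ≤ (⌊x⌋ + 1) * t := by
  rw [Int.add_one_le_iff, Int.floor_lt]
  push_cast
  exact mul_lt_mul_of_pos_right (Int.lt_floor_add_one x) (Nat.cast_pos.2 ht)

end FloorCeil

section BracketSum

variable {n m : ℕ} (d : Fin n → ℚ) (g : Fin m → ℚ)

def bracketSum (x : ℚ) : ℤ :=
  ∑ i, ⌈d i * x⌉ + ∑ j, (⌊g j * x⌋ + 1)

theorem bracketSum_mul_natCast_le (x : ℚ) {t : ℕ} (ht : 0 < t) :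
    bracketSum d g (x * t) ≤ bracketSum d g x * t := by
  rw [bracketSum, bracketSum, add_mul, Finset.sum_mul, Finset.sum_mul]
  refine add_le_add (Finset.sum_le_sum fun i _ => ?_) (Finset.sum_le_sum fun j _ => ?_)
  · rw [← mul_assoc]
    exact Int.ceil_mul_natCast_le _ t
  · rw [← mul_assoc]
    exact Int.floor_mul_natCast_add_one_le _ ht

theorem one_sub_bracketSum_le_of_mul_natCast {x : ℚ} {t : ℕ} (ht : 0 < t) {N : ℤ}
    (h : 1 - bracketSum d g (x * t) = t * N) : 1 - bracketSum d g x ≤ N := by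
  have hsub := bracketSum_mul_natCast_le d g x ht
  have ht' : (0 : ℤ) < t := by exact_mod_cast ht
  nlinarith

end BracketSum

theorem stmt_9_general (n m : ℕ) (d : Fin n → ℚ) (g : Fin m → ℚ)
    (f : ℕ → ℚ)
    (hf : ∀ k : ℕ, 0 < k →
      f k = -(1/(k:ℚ)) * (-1 + (∑ i, (⌈d i * (k:ℚ)⌉ : ℚ))
        + ∑ j, ((⌊g j * (k:ℚ)⌋ : ℚ) + 1)))
    (ypos : ℚ)
    (hy : IsLeast {x : ℚ | ∃ k : ℕ, 0 < k ∧ x = f k} ypos)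
    (kpos : ℕ)
    (hk : IsLeast {k : ℕ | 0 < k ∧ f k = ypos} kpos) :
    IsLeast {k : ℕ | 0 < k ∧ ∃ z : ℤ, (z:ℚ) = (k:ℚ) * ypos} kpos := by
  obtain ⟨⟨hk0, hfk⟩, hkmin⟩ := hk
  have hS : ∀ k : ℕ, 0 < k → (k : ℚ) * f k = ((1 - bracketSum d g k : ℤ) : ℚ) := by
    intro k hk
    rw [hf k hk, bracketSum]
    push_cast
    field_simp
    ring
  have hkpos_int : ((1 - bracketSum d g kpos : ℤ) : ℚ) = kpos * ypos := by rw [← hS kpos hk0, hfk]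
  obtain ⟨t, rfl⟩ := Rat.den_dvd_of_intCast_eq_mul hkpos_int
  have ht : 0 < t := Nat.pos_of_mul_pos_left hk0
  have hnum : 1 - bracketSum d g (ypos.den * t) = t * ypos.num := by
    have h : ((t * ypos.num : ℤ) : ℚ) = (ypos.den * t : ℕ) * ypos := by
      push_cast
      rw [← Rat.mul_den_eq_num]
      ring
    rw [← Nat.cast_mul]
    exact Int.cast_inj.mp (hkpos_int.trans h.symm)
  have hfq_le : f ypos.den ≤ ypos := by
    have hq := one_sub_bracketSum_le_of_mul_natCast d g ht hnum
    rw [← mul_le_mul_iff_right₀ (Nat.cast_pos.2 ypos.pos), hS _ ypos.pos, mul_comm,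
      Rat.mul_den_eq_num]
    exact_mod_cast hq
  have hfq : f ypos.den = ypos := le_antisymm hfq_le (hy.2 ⟨_, ypos.pos, rfl⟩)
  refine ⟨⟨hk0, _, hkpos_int⟩, fun k ⟨hk, _, hz⟩ => ?_⟩
  exact (hkmin ⟨ypos.pos, hfq⟩).trans (Nat.le_of_dvd hk (Rat.den_dvd_of_intCast_eq_mul hz))

/-- Proposition 4.5 (right-hand endpoint): assuming the manifold is not a solid torus
(`m ≥ 1` or at least two `dᵢ` non-integral), if `y₊` is the least element of
`{f k : k > 0}` with `f k = -(1/k)(-1 + Σ⌈dᵢk⌉ + Σ(⌊gⱼk⌋+1))`, then the least positive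
`k` with `f k = y₊` is the denominator of `y₊`. -/
theorem stmt_9 (n m : ℕ) (d : Fin n → ℚ) (g : Fin m → ℚ)
    (hnst : 1 ≤ m ∨ ∃ i j : Fin n, i ≠ j ∧
      (¬∃ z : ℤ, (z:ℚ) = d i) ∧ (¬∃ z : ℤ, (z:ℚ) = d j))
    (f : ℕ → ℚ)
    (hf : ∀ k : ℕ, 0 < k →
      f k = -(1/(k:ℚ)) * (-1 + (∑ i, (⌈d i * (k:ℚ)⌉ : ℚ))
        + ∑ j, ((⌊g j * (k:ℚ)⌋ : ℚ) + 1)))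
    (ypos : ℚ)
    (hy : IsLeast {x : ℚ | ∃ k : ℕ, 0 < k ∧ x = f k} ypos)
    (kpos : ℕ)
    (hk : IsLeast {k : ℕ | 0 < k ∧ f k = ypos} kpos) :
    IsLeast {k : ℕ | 0 < k ∧ ∃ z : ℤ, (z:ℚ) = (k:ℚ) * ypos} kpos :=
  stmt_9_general n m d g f hf ypos hy kpos hk
end

section
/- Let n and m be natural numbers and let d_1,…,d_n, g_1,…,g_m be rational numbers; assume that m ≥ 1 or that at least two of the d_i are not integers. Let s be a positive integer such that s·d_i and s·g_j are integers for all i and j. Set f₋(k) := −(1/k)·(1 + Σ_{i=1}^{n} ⌊d_i·k⌋ + Σ_{j=1}^{m} (⌈g_j·k⌉ − 1)) and f₊(k) := −(1/k)·(−1 + Σ_{i=1}^{n} ⌈d_i·k⌉ + Σ_{j=1}^{m} (⌊g_j·k⌋ + 1)). Then there exists a positive integer k₀ ≤ s such that f₋(k₀) ≥ f₋(k) for every positive integer k, and there exists a positive integer k₁ ≤ s such that f₊(k₁) ≤ f₊(k) for every positive integer k. In particular, the supremum of f₋ and the infimum of f₊ over the positive integers are attained. -/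
lemma stmt_11_key (n m : ℕ) (d : Fin n → ℚ) (g : Fin m → ℚ)
    (hnst : 1 ≤ m ∨ ∃ i j : Fin n, i ≠ j ∧
      (¬∃ z : ℤ, (z:ℚ) = d i) ∧ (¬∃ z : ℤ, (z:ℚ) = d j))
    (s : ℕ) (hs : 0 < s)
    (hsd : ∀ i : Fin n, ∃ z : ℤ, (z:ℚ) = (s:ℚ) * d i)
    (hsg : ∀ j : Fin m, ∃ z : ℤ, (z:ℚ) = (s:ℚ) * g j) :
    ∃ k₀ : ℕ, 0 < k₀ ∧ k₀ ≤ s ∧ ∀ k : ℕ, 0 < k →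
      -(1/(k:ℚ)) * (1 + (∑ i, (⌊d i * (k:ℚ)⌋ : ℚ)) + ∑ j, ((⌈g j * (k:ℚ)⌉ : ℚ) - 1))
      ≤ -(1/(k₀:ℚ)) * (1 + (∑ i, (⌊d i * (k₀:ℚ)⌋ : ℚ)) + ∑ j, ((⌈g j * (k₀:ℚ)⌉ : ℚ) - 1)) := by
  set T : ℚ := (∑ i, d i) + ∑ j, g j with hT
  set N : ℕ → ℚ := fun k =>
    1 + (∑ i, (⌊d i * (k:ℚ)⌋ : ℚ)) + ∑ j, ((⌈g j * (k:ℚ)⌉ : ℚ) - 1) with hN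
  set F : ℕ → ℚ := fun k => -(1/(k:ℚ)) * N k with hF
  set c : ℕ → ℚ := fun k => (k:ℚ) * T - N k with hc
  -- per-index shift by s
  have hdf : ∀ (i : Fin n) (k : ℕ), (⌊d i * ((k+s:ℕ):ℚ)⌋ : ℚ) = ⌊d i * (k:ℚ)⌋ + (s:ℚ) * d i := by
    intro i k
    obtain ⟨z, hz⟩ := hsd i
    have h1 : d i * ((k+s:ℕ):ℚ) = d i * (k:ℚ) + (z:ℤ) := by push_cast; linear_combination -hz
    rw [h1, Int.floor_add_intCast]; push_cast; rw [hz]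
  have hgf : ∀ (j : Fin m) (k : ℕ), (⌈g j * ((k+s:ℕ):ℚ)⌉ : ℚ) = ⌈g j * (k:ℚ)⌉ + (s:ℚ) * g j := by
    intro j k
    obtain ⟨z, hz⟩ := hsg j
    have h1 : g j * ((k+s:ℕ):ℚ) = g j * (k:ℚ) + (z:ℤ) := by push_cast; linear_combination -hz
    rw [h1, Int.ceil_add_intCast]; push_cast; rw [hz]
  have hNadd : ∀ k : ℕ, N (k+s) = N k + (s:ℚ) * T := by
    intro k
    have h1 : ∀ i ∈ Finset.univ, (⌊d i * ((k+s:ℕ):ℚ)⌋:ℚ) = (⌊d i * (k:ℚ)⌋:ℚ) + (s:ℚ)*d i :=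
      fun i _ => hdf i k
    have h2 : ∀ j ∈ Finset.univ,
        ((⌈g j * ((k+s:ℕ):ℚ)⌉:ℚ) - 1) = ((⌈g j * (k:ℚ)⌉:ℚ) - 1) + (s:ℚ)*g j :=
      fun j _ => by rw [hgf j k]; ring
    simp only [hN, hT]
    rw [Finset.sum_congr rfl h1, Finset.sum_congr rfl h2, Finset.sum_add_distrib,
      Finset.sum_add_distrib, ← Finset.mul_sum, ← Finset.mul_sum]
    push_cast
    ring
  have hcadd : ∀ k : ℕ, c (k+s) = c k := by
    intro k
    simp only [hc]
    rw [hNadd k]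
    push_cast
    ring
  have hcper : ∀ (q r : ℕ), c (r + q*s) = c r := by
    intro q
    induction q with
    | zero => intro r; simp
    | succ t ih => intro r
                   have : r + (t+1)*s = (r + t*s) + s := by ring
                   rw [this, hcadd, ih]
  -- formula for F
  have hFval : ∀ k : ℕ, 0 < k → F k = -T + c k / k := by
    intro k hk
    have hk0 : (k:ℚ) ≠ 0 := by positivity
    simp only [hF, hc]
    field_simp
    ring
  -- values at s
  have hds : ∀ i : Fin n, (⌊d i * (s:ℚ)⌋ : ℚ) = (s:ℚ) * d i := by
    intro i
    obtain ⟨z, hz⟩ := hsd i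
    rw [show d i * (s:ℚ) = ((z:ℤ):ℚ) by rw [hz]; ring, Int.floor_intCast, hz]
  have hgs : ∀ j : Fin m, (⌈g j * (s:ℚ)⌉ : ℚ) = (s:ℚ) * g j := by
    intro j
    obtain ⟨z, hz⟩ := hsg j
    rw [show g j * (s:ℚ) = ((z:ℤ):ℚ) by rw [hz]; ring, Int.ceil_intCast, hz]
  have hcs : c s = (m:ℚ) - 1 := by
    simp only [hc, hN, hT]
    rw [Finset.sum_congr rfl (fun i _ => hds i),
        Finset.sum_congr rfl (fun j _ => by rw [hgs j] :
          ∀ j ∈ Finset.univ, ((⌈g j * (s:ℚ)⌉:ℚ) - 1) = (s:ℚ)*g j - 1),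
        Finset.sum_sub_distrib, ← Finset.mul_sum, ← Finset.mul_sum]
    simp
    ring
  -- existence of r* ≤ s with c r* ≥ 0
  have hrstar : ∃ r : ℕ, 0 < r ∧ r ≤ s ∧ 0 ≤ c r := by
    rcases hnst with hm | ⟨i₀, j₀, hij, hdi, hdj⟩
    · refine ⟨s, hs, le_refl s, ?_⟩
      rw [hcs]
      have h1 : (1:ℚ) ≤ m := by exact_mod_cast hm
      linarith
    · -- use the two non-integer d's, at r = 1 and r = s-1
      have hs2 : 2 ≤ s := by
        by_contra h
        have hs1 : s = 1 := by omega
        obtain ⟨z, hz⟩ := hsd i₀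
        exact hdi ⟨z, by rw [hz, hs1]; push_cast; ring⟩
      have hcast : ((s-1:ℕ):ℚ) = (s:ℚ) - 1 := by
        rw [Nat.cast_sub (by omega : 1 ≤ s)]; push_cast; ring
      -- floor bounds
      have hfloor_gap : ∀ i : Fin n, (¬∃ z : ℤ, (z:ℚ) = d i) →
          (⌊d i * (1:ℚ)⌋:ℚ) + ⌊d i * ((s:ℚ)-1)⌋ ≤ (s:ℚ) * d i - 1 := by
        intro i hi
        obtain ⟨z, hz⟩ := hsd i
        have hxy : d i * (1:ℚ) + d i * ((s:ℚ)-1) = (z:ℚ) := by rw [hz]; ring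
        have h1 : (⌊d i * (1:ℚ)⌋:ℚ) < d i * (1:ℚ) := by
          refine lt_of_le_of_ne (Int.floor_le _) (fun h => hi ⟨⌊d i * (1:ℚ)⌋, ?_⟩)
          rw [h]; ring
        have h2 := Int.floor_le (d i * ((s:ℚ)-1))
        have h3 : ((⌊d i * (1:ℚ)⌋ + ⌊d i * ((s:ℚ)-1)⌋ : ℤ):ℚ) < (z:ℚ) := by push_cast; linarith
        have h4 : ⌊d i * (1:ℚ)⌋ + ⌊d i * ((s:ℚ)-1)⌋ < z := by exact_mod_cast h3
        have h4' : ⌊d i * (1:ℚ)⌋ + ⌊d i * ((s:ℚ)-1)⌋ ≤ z - 1 := by omega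
        have h5 : ((⌊d i * (1:ℚ)⌋ + ⌊d i * ((s:ℚ)-1)⌋ : ℤ):ℚ) ≤ ((z - 1 : ℤ):ℚ) := by exact_mod_cast h4'
        push_cast at h5
        linarith [h5, hz.symm.le]
      have hfloor_le : ∀ i : Fin n,
          (⌊d i * (1:ℚ)⌋:ℚ) + ⌊d i * ((s:ℚ)-1)⌋ ≤ (s:ℚ) * d i := by
        intro i
        have h1 := Int.floor_le (d i * (1:ℚ))
        have h2 := Int.floor_le (d i * ((s:ℚ)-1))
        nlinarith [h1, h2]
      have hceil_gap : ∀ j : Fin m,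
          ((⌈g j * (1:ℚ)⌉:ℚ) - 1) + ((⌈g j * ((s:ℚ)-1)⌉:ℚ) - 1) ≤ (s:ℚ) * g j := by
        intro j
        obtain ⟨z, hz⟩ := hsg j
        have h1 := Int.ceil_lt_add_one (g j * (1:ℚ))
        have h2 := Int.ceil_lt_add_one (g j * ((s:ℚ)-1))
        have h3 : ((⌈g j * (1:ℚ)⌉ + ⌈g j * ((s:ℚ)-1)⌉ : ℤ):ℚ) < (z:ℚ) + 2 := by
          push_cast; nlinarith [h1, h2, hz.symm.le]
        have h4 : ⌈g j * (1:ℚ)⌉ + ⌈g j * ((s:ℚ)-1)⌉ ≤ z + 1 := by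
          have := (by exact_mod_cast h3 : (⌈g j * (1:ℚ)⌉ + ⌈g j * ((s:ℚ)-1)⌉ : ℤ) < z + 2)
          omega
        have h5 : ((⌈g j * (1:ℚ)⌉ + ⌈g j * ((s:ℚ)-1)⌉ : ℤ):ℚ) ≤ ((z + 1 : ℤ):ℚ) := by exact_mod_cast h4
        push_cast at h5
        linarith [h5, hz.symm.le]
      -- sum bound for the d part
      have hA : (∑ i, (⌊d i * (1:ℚ)⌋:ℚ)) + (∑ i, (⌊d i * ((s:ℚ)-1)⌋:ℚ))
          ≤ (s:ℚ) * (∑ i, d i) - 2 := by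
        have key : (2:ℚ) ≤ ∑ i, ((s:ℚ) * d i - ⌊d i * (1:ℚ)⌋ - ⌊d i * ((s:ℚ)-1)⌋) := by
          calc (2:ℚ) ≤ ∑ i ∈ ({i₀, j₀} : Finset (Fin n)),
                ((s:ℚ) * d i - ⌊d i * (1:ℚ)⌋ - ⌊d i * ((s:ℚ)-1)⌋) := by
                rw [Finset.sum_pair hij]
                have := hfloor_gap i₀ hdi
                have := hfloor_gap j₀ hdj
                linarith
            _ ≤ ∑ i, ((s:ℚ) * d i - ⌊d i * (1:ℚ)⌋ - ⌊d i * ((s:ℚ)-1)⌋) := by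
                refine Finset.sum_le_sum_of_subset_of_nonneg (Finset.subset_univ _) ?_
                intro i _ _
                have := hfloor_le i
                linarith
        rw [Finset.sum_sub_distrib, Finset.sum_sub_distrib, ← Finset.mul_sum] at key
        linarith
      -- sum bound for the g part
      have hB : (∑ j, ((⌈g j * (1:ℚ)⌉:ℚ) - 1)) + (∑ j, ((⌈g j * ((s:ℚ)-1)⌉:ℚ) - 1))
          ≤ (s:ℚ) * (∑ j, g j) := by
        rw [← Finset.sum_add_distrib, Finset.mul_sum]
        exact Finset.sum_le_sum (fun j _ => hceil_gap j)
      have hge : 0 ≤ c 1 + c (s-1) := by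
        simp only [hc, hN, hT, hcast, Nat.cast_one]
        push_cast
        linarith [hA, hB]
      rcases le_or_gt 0 (c 1) with h1 | h1
      · exact ⟨1, one_pos, by omega, h1⟩
      · exact ⟨s-1, by omega, by omega, by linarith⟩
  -- choose the maximizer over {1,…,s}
  obtain ⟨r₀, hr₀pos, hr₀s, hr₀c⟩ := hrstar
  obtain ⟨k₀, hk₀mem, hk₀max⟩ := Finset.exists_max_image (Finset.Icc 1 s) F
    ⟨s, Finset.mem_Icc.mpr ⟨hs, le_refl s⟩⟩
  obtain ⟨hk₀1, hk₀s⟩ := Finset.mem_Icc.mp hk₀mem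
  refine ⟨k₀, hk₀1, hk₀s, ?_⟩
  intro k hk
  show F k ≤ F k₀
  have hmd := Nat.mod_add_div' (k-1) s
  set r := (k-1) % s + 1 with hrdef
  set q := (k-1)/s with hqdef
  have hkr : k = r + q*s := by omega
  have hrpos : 0 < r := Nat.succ_pos _
  have hrles : r ≤ s := by
    have := Nat.mod_lt (k-1) hs
    omega
  have hck : c k = c r := by rw [hkr]; exact hcper q r
  have hrk : (r:ℚ) ≤ (k:ℚ) := by exact_mod_cast (by omega : r ≤ k)
  have hrQ : (0:ℚ) < r := by exact_mod_cast hrpos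
  have hkQ : (0:ℚ) < k := by exact_mod_cast hk
  have hFr : F r ≤ F k₀ := hk₀max r (Finset.mem_Icc.mpr ⟨hrpos, hrles⟩)
  have hFk : F k = -T + c r / (k:ℚ) := by rw [hFval k hk, hck]
  rcases le_or_gt 0 (c r) with hcr | hcr
  · have h1 : c r / k ≤ c r / r := by gcongr
    have hFrv := hFval r hrpos
    linarith [h1, hFr]
  · have hFr₀ : F r₀ ≤ F k₀ := hk₀max r₀ (Finset.mem_Icc.mpr ⟨hr₀pos, hr₀s⟩)
    have hr₀Q : (0:ℚ) < r₀ := by exact_mod_cast hr₀pos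
    have h1 : c r / (k:ℚ) ≤ 0 := div_nonpos_iff.mpr (Or.inr ⟨hcr.le, hkQ.le⟩)
    have h2 : 0 ≤ c r₀ / (r₀:ℚ) := div_nonneg hr₀c hr₀Q.le
    have hFr₀v := hFval r₀ hr₀pos
    linarith [hFr₀]

/-- Remark after Theorem 1.3: the extrema defining the endpoints `y₋` and `y₊` of the
L-space interval are attained at some positive `k ≤ s`, where `s` is a common positive
multiple of all denominators involved. -/
theorem stmt_11 (n m : ℕ) (d : Fin n → ℚ) (g : Fin m → ℚ)
    (hnst : 1 ≤ m ∨ ∃ i j : Fin n, i ≠ j ∧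
      (¬∃ z : ℤ, (z:ℚ) = d i) ∧ (¬∃ z : ℤ, (z:ℚ) = d j))
    (s : ℕ) (hs : 0 < s)
    (hsd : ∀ i : Fin n, ∃ z : ℤ, (z:ℚ) = (s:ℚ) * d i)
    (hsg : ∀ j : Fin m, ∃ z : ℤ, (z:ℚ) = (s:ℚ) * g j)
    (fneg fpos : ℕ → ℚ)
    (hfneg : ∀ k : ℕ, 0 < k →
      fneg k = -(1/(k:ℚ)) * (1 + (∑ i, (⌊d i * (k:ℚ)⌋ : ℚ))
        + ∑ j, ((⌈g j * (k:ℚ)⌉ : ℚ) - 1)))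
    (hfpos : ∀ k : ℕ, 0 < k →
      fpos k = -(1/(k:ℚ)) * (-1 + (∑ i, (⌈d i * (k:ℚ)⌉ : ℚ))
        + ∑ j, ((⌊g j * (k:ℚ)⌋ : ℚ) + 1))) :
    (∃ k₀ : ℕ, 0 < k₀ ∧ k₀ ≤ s ∧ ∀ k : ℕ, 0 < k → fneg k ≤ fneg k₀) ∧
    (∃ k₁ : ℕ, 0 < k₁ ∧ k₁ ≤ s ∧ ∀ k : ℕ, 0 < k → fpos k₁ ≤ fpos k) := by
  constructor
  · obtain ⟨k₀, h1, h2, h3⟩ := stmt_11_key n m d g hnst s hs hsd hsg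
    refine ⟨k₀, h1, h2, fun k hk => ?_⟩
    rw [hfneg k hk, hfneg k₀ h1]
    exact h3 k hk
  · -- apply the key lemma to (-d, -g)
    have hnst' : 1 ≤ m ∨ ∃ i j : Fin n, i ≠ j ∧
        (¬∃ z : ℤ, (z:ℚ) = -d i) ∧ (¬∃ z : ℤ, (z:ℚ) = -d j) := by
      rcases hnst with h | ⟨i, j, hij, hi, hj⟩
      · exact Or.inl h
      · refine Or.inr ⟨i, j, hij, ?_, ?_⟩
        · rintro ⟨z, hz⟩; exact hi ⟨-z, by push_cast; linarith⟩
        · rintro ⟨z, hz⟩; exact hj ⟨-z, by push_cast; linarith⟩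
    have hsd' : ∀ i : Fin n, ∃ z : ℤ, (z:ℚ) = (s:ℚ) * (-d i) := by
      intro i; obtain ⟨z, hz⟩ := hsd i; exact ⟨-z, by push_cast; linarith⟩
    have hsg' : ∀ j : Fin m, ∃ z : ℤ, (z:ℚ) = (s:ℚ) * (-g j) := by
      intro j; obtain ⟨z, hz⟩ := hsg j; exact ⟨-z, by push_cast; linarith⟩
    obtain ⟨k₁, h1, h2, h3⟩ := stmt_11_key n m (fun i => -d i) (fun j => -g j) hnst' s hs hsd' hsg'
    have hE : ∀ k : ℕ, 0 < k →
        -(1/(k:ℚ)) * (1 + (∑ i, (⌊(fun i => -d i) i * (k:ℚ)⌋ : ℚ))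
          + ∑ j, ((⌈(fun j => -g j) j * (k:ℚ)⌉ : ℚ) - 1)) = -fpos k := by
      intro k hk
      rw [hfpos k hk]
      have e1 : ∀ i ∈ Finset.univ, (⌊(fun i => -d i) i * (k:ℚ)⌋ : ℚ)
          = -(⌈d i * (k:ℚ)⌉ : ℚ) := by
        intro i _
        simp only
        rw [neg_mul, Int.floor_neg]
        push_cast
        ring
      have e2 : ∀ j ∈ Finset.univ, ((⌈(fun j => -g j) j * (k:ℚ)⌉ : ℚ) - 1)
          = -((⌊g j * (k:ℚ)⌋ : ℚ) + 1) := by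
        intro j _
        simp only
        rw [neg_mul, Int.ceil_neg]
        push_cast
        ring
      rw [Finset.sum_congr rfl e1, Finset.sum_congr rfl e2,
        Finset.sum_neg_distrib, Finset.sum_neg_distrib]
      ring
    refine ⟨k₁, h1, h2, fun k hk => ?_⟩
    have := h3 k hk
    rw [hE k hk, hE k₁ h1] at this
    linarith
end

section
/- Let N, p, q, p*, q* be integers with p ≥ 1, p·p* − q·q* = 1, 0 ≤ q* < p, and q − N·p > 0. Set w := q*/p + 1/(p·(q − N·p)) ∈ ℚ and, for each positive integer k, f(k) := (⌊(q*/p)·k⌋ − ⌊w·k⌋)/k. Then f(k) = 0 for every positive integer k < q − N·p, f(q − N·p) = −1/(q − N·p), and −1/(q − N·p) is the least element of the set { f(k) : k a positive integer }. -/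
lemma floor_int_div (a b : ℤ) (hb : 0 < b) : ⌊(a:ℚ)/(b:ℚ)⌋ = a / b := by
  obtain ⟨n, rfl⟩ : ∃ n : ℕ, b = (n : ℤ) := ⟨b.toNat, (Int.toNat_of_nonneg hb.le).symm⟩
  exact_mod_cast Rat.floor_intCast_div_natCast a n


/-- Cabling computation (Section 5.3, case `q - Np > 0`): with
`w = q*/p + 1/(p(q - Np))` and `f k = (⌊(q*/p)k⌋ - ⌊wk⌋)/k`, one has `f k = 0` for
`0 < k < q - Np`, `f (q - Np) = -1/(q - Np)`, and `-1/(q - Np)` is the least element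
of `{f k : k > 0}`. -/
theorem stmt_12 (N p q pstar qstar : ℤ)
    (hp : 1 ≤ p) (hbez : p * pstar - q * qstar = 1)
    (hq0 : 0 ≤ qstar) (hqp : qstar < p) (hNp : 0 < q - N * p)
    (w : ℚ) (hw : w = (qstar : ℚ)/(p : ℚ) + 1/((p : ℚ) * ((q : ℚ) - (N : ℚ) * (p : ℚ))))
    (f : ℤ → ℚ)
    (hf : ∀ k : ℤ, 0 < k →
      f k = ((⌊((qstar : ℚ)/(p : ℚ)) * (k:ℚ)⌋ : ℚ) - (⌊w * (k:ℚ)⌋ : ℚ))/(k:ℚ)) :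
    (∀ k : ℤ, 0 < k → k < q - N * p → f k = 0) ∧
    f (q - N * p) = -1/((q - N * p : ℤ) : ℚ) ∧
    IsLeast {x : ℚ | ∃ k : ℤ, 0 < k ∧ x = f k} (-1/((q - N * p : ℤ) : ℚ)) := by
  set m : ℤ := q - N * p with hm
  have hp0 : (0:ℤ) < p := hp
  have hpQ : ((p:ℚ)) ≠ 0 := by exact_mod_cast hp0.ne'
  have hmQ : ((m:ℚ)) ≠ 0 := by exact_mod_cast hNp.ne'
  have hpm : (0:ℤ) < p * m := mul_pos hp0 hNp
  -- floor computations
  have floor1 : ∀ k : ℤ, ⌊((qstar : ℚ)/(p : ℚ)) * (k:ℚ)⌋ = (qstar * k) / p := by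
    intro k
    rw [div_mul_eq_mul_div, ← Int.cast_mul, floor_int_div _ _ hp0]
  have hwk : ∀ k : ℤ, w * (k:ℚ) = ((qstar * k * m + k : ℤ) : ℚ) / ((p * m : ℤ) : ℚ) := by
    intro k
    have hmcast : ((m:ℤ):ℚ) = (q:ℚ) - (N:ℚ) * (p:ℚ) := by push_cast [hm]; ring
    rw [hw]
    push_cast
    rw [← hmcast]
    push_cast
    field_simp
  have floor2 : ∀ k : ℤ, ⌊w * (k:ℚ)⌋ = (qstar * k * m + k) / (p * m) := by
    intro k; rw [hwk k, floor_int_div _ _ hpm]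
  -- key decomposition: for k > 0, ⌊w k⌋ = (qstar k)/p + t k where t k = (r*m+k)/(p*m)
  have decomp : ∀ k : ℤ,
      (qstar * k * m + k) / (p * m) = (qstar * k) / p + (qstar * k % p * m + k) / (p * m) := by
    intro k
    have h1 : qstar * k * m + k = (qstar * k % p * m + k) + p * m * ((qstar * k) / p) := by
      nlinarith [Int.mul_ediv_add_emod (qstar * k) p]
    rw [h1, Int.add_mul_ediv_left _ _ hpm.ne', add_comm]
  -- f k = - t k / k
  have hfk : ∀ k : ℤ, 0 < k →
      f k = -(((qstar * k % p * m + k) / (p * m) : ℤ) : ℚ) / (k:ℚ) := by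
    intro k hk
    rw [hf k hk, floor1, floor2, decomp]
    push_cast
    ring
  have hr : ∀ k : ℤ, 0 ≤ qstar * k % p ∧ qstar * k % p < p := fun k =>
    ⟨Int.emod_nonneg _ hp0.ne', Int.emod_lt_of_pos _ hp0⟩
  -- part 1
  have part1 : ∀ k : ℤ, 0 < k → k < m → f k = 0 := by
    intro k hk hkm
    have ht : (qstar * k % p * m + k) / (p * m) = 0 := by
      apply Int.ediv_eq_zero_of_lt
      · nlinarith [(hr k).1]
      · nlinarith [(hr k).2]
    rw [hfk k hk, ht]
    simp
  -- r at k = m is p - 1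
  have hrm : qstar * m % p = p - 1 := by
    have key : qstar * m % p = (-1) % p := by
      have : qstar * m = q * qstar - qstar * N * p := by rw [hm]; ring
      have h2 : q * qstar = p * pstar - 1 := by linarith
      rw [this, h2]
      have : p * pstar - 1 - qstar * N * p = -1 + p * (pstar - qstar * N) := by ring
      rw [this, Int.add_mul_emod_self_left]
    rw [key, show (-1:ℤ) = (p-1) + p * (-1) by ring, Int.add_mul_emod_self_left,
      Int.emod_eq_of_lt (by omega) (by omega)]
  have part2 : f m = -1 / ((m:ℤ):ℚ) := by
    have ht : (qstar * m % p * m + m) / (p * m) = 1 := by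
      rw [hrm]
      have : (p - 1) * m + m = p * m := by ring
      rw [this, Int.ediv_self hpm.ne']
    rw [hfk m hNp, ht]
    norm_num
  refine ⟨part1, part2, ⟨⟨m, hNp, part2.symm⟩, ?_⟩⟩
  rintro x ⟨k, hk, rfl⟩
  rw [hfk k hk]
  set t : ℤ := (qstar * k % p * m + k) / (p * m) with hts
  have ht0 : 0 ≤ t := Int.ediv_nonneg (by nlinarith [(hr k).1]) hpm.le
  have htk : t * m ≤ k := by
    rcases eq_or_lt_of_le ht0 with h0 | h1
    · rw [← h0]; simpa using hk.le
    · have hle : t * (p * m) ≤ qstar * k % p * m + k := by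
        have h2 := Int.mul_ediv_add_emod (qstar * k % p * m + k) (p * m)
        have h3 := Int.emod_nonneg (qstar * k % p * m + k) hpm.ne'
        nlinarith
      nlinarith [(hr k).2, mul_nonneg (mul_nonneg (by linarith : (0:ℤ) ≤ t - 1) (by linarith : (0:ℤ) ≤ p - 1)) hNp.le]
  rw [neg_div, neg_div, neg_le_neg_iff, div_le_div_iff₀ (by exact_mod_cast hk) (by exact_mod_cast hNp)]
  have : (t:ℚ) * (m:ℚ) ≤ (k:ℚ) := by exact_mod_cast htk
  push_cast
  linarith
end

section
/- Let p and q* be integers with 0 < q* < p and gcd(p, q*) = 1, and let w be a rational number. For each positive integer k set f(k) := (⌈(q*/p)·k⌉ − ⌈w·k⌉)/k. Then 0 is the greatest element of the set { f(k) : k a positive integer } if and only if q*/p ≤ w ≤ 1. -/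
/-- Equation (5.17): with `f k = (⌈(q*/p)k⌉ - ⌈wk⌉)/k`, `0` is the greatest element of
`{f k : k > 0}` iff `q*/p ≤ w ≤ 1`. -/
theorem stmt_14 (p qstar : ℤ) (hq : 0 < qstar) (hqp : qstar < p)
    (hgcd : Int.gcd p qstar = 1) (w : ℚ) :
    IsGreatest {x : ℚ | ∃ k : ℕ, 0 < k ∧
        x = ((⌈((qstar : ℚ)/(p : ℚ)) * (k:ℚ)⌉ : ℚ) - (⌈w * (k:ℚ)⌉ : ℚ))/(k:ℚ)} 0 ↔
      ((qstar : ℚ)/(p : ℚ) ≤ w ∧ w ≤ 1) := by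
  have hpz : (0:ℤ) < p := hq.trans hqp
  have hpq : (0:ℚ) < (p:ℚ) := by exact_mod_cast hpz
  have hqq : (0:ℚ) < (qstar:ℚ) := by exact_mod_cast hq
  set r : ℚ := (qstar:ℚ)/(p:ℚ) with hr
  have hr0 : 0 < r := by positivity
  have hr1 : r ≤ 1 := by rw [hr, div_le_one hpq]; exact_mod_cast hqp.le
  constructor
  · rintro ⟨⟨k, hk, hk0⟩, hub⟩
    have hkq : (0:ℚ) < (k:ℚ) := by exact_mod_cast hk
    have hceq : (⌈r * (k:ℚ)⌉ : ℚ) = (⌈w * (k:ℚ)⌉ : ℚ) := by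
      have := hk0.symm
      rw [div_eq_zero_iff] at this
      rcases this with h | h
      · linarith [sub_eq_zero.mp h]
      · exact absurd h hkq.ne'
    constructor
    · -- r ≤ w
      by_contra hwr
      push_neg at hwr
      have hd : 0 < r - w := by linarith
      obtain ⟨n, hn⟩ := exists_nat_gt (1/(r - w))
      have hn0 : 0 < n := by
        have h1 : (0:ℚ) < (n:ℚ) := lt_trans (by positivity) hn
        exact_mod_cast h1
      set K : ℕ := n * p.toNat with hK
      have hKpos : 0 < K := by
        have : 0 < p.toNat := by omega
        exact Nat.mul_pos hn0 this
      have hKq : (K:ℚ) = (n:ℚ) * (p:ℚ) := by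
        have hpt : ((p.toNat : ℕ) : ℚ) = (p:ℚ) := by
          exact_mod_cast Int.toNat_of_nonneg hpz.le
        rw [hK]; push_cast [hpt]; ring
      have hKq0 : (0:ℚ) < (K:ℚ) := by exact_mod_cast hKpos
      have h1 : r * (K:ℚ) = ((n * qstar : ℤ) : ℚ) := by
        rw [hKq, hr]; push_cast; field_simp
      have hceilr : ⌈r * (K:ℚ)⌉ = n * qstar := by
        rw [h1, Int.ceil_intCast]
      have hnd : 1 < (n:ℚ) * (r - w) := by
        rw [div_lt_iff₀ hd] at hn; linarith
      have h2 : w * (K:ℚ) ≤ ((n * qstar - 1 : ℤ) : ℚ) := by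
        have hrk : (r - w) * (K:ℚ) ≥ 1 := by
          rw [hKq]
          have hp1 : (1:ℚ) ≤ (p:ℚ) := by exact_mod_cast hpz
          nlinarith
        have : w * (K:ℚ) = r * (K:ℚ) - (r - w) * (K:ℚ) := by ring
        rw [this, h1]
        push_cast
        linarith
      have hceilw : ⌈w * (K:ℚ)⌉ ≤ n * qstar - 1 := Int.ceil_le.mpr h2
      have hlt : ⌈w * (K:ℚ)⌉ < ⌈r * (K:ℚ)⌉ := by omega
      have hmem : ((⌈r * (K:ℚ)⌉ : ℚ) - (⌈w * (K:ℚ)⌉ : ℚ))/(K:ℚ) ≤ 0 :=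
        hub ⟨K, hKpos, rfl⟩
      have hpos : 0 < ((⌈r * (K:ℚ)⌉ : ℚ) - (⌈w * (K:ℚ)⌉ : ℚ))/(K:ℚ) := by
        apply div_pos _ hKq0
        have : (⌈w * (K:ℚ)⌉ : ℚ) < (⌈r * (K:ℚ)⌉ : ℚ) := by exact_mod_cast hlt
        linarith
      linarith
    · -- w ≤ 1
      have h1 : w * (k:ℚ) ≤ (⌈w * (k:ℚ)⌉ : ℚ) := Int.le_ceil _
      have h2 : ⌈r * (k:ℚ)⌉ ≤ (k : ℤ) := Int.ceil_le.mpr (by push_cast; nlinarith)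
      have h3 : (⌈r * (k:ℚ)⌉ : ℚ) ≤ (k:ℚ) := by exact_mod_cast h2
      nlinarith [hceq ▸ h3]
  · rintro ⟨hw1, hw2⟩
    have hw0 : 0 < w := lt_of_lt_of_le hr0 hw1
    constructor
    · refine ⟨1, one_pos, ?_⟩
      have hcr : ⌈r * ((1:ℕ):ℚ)⌉ = 1 := by
        push_cast; rw [mul_one]
        rw [Int.ceil_eq_iff]
        constructor <;> push_cast <;> linarith
      have hcw : ⌈w * ((1:ℕ):ℚ)⌉ = 1 := by
        push_cast; rw [mul_one]
        rw [Int.ceil_eq_iff]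
        constructor <;> push_cast <;> linarith
      rw [hcr, hcw]
      norm_num
    · rintro x ⟨k, hk, rfl⟩
      have hkq : (0:ℚ) ≤ (k:ℚ) := by positivity
      apply div_nonpos_of_nonpos_of_nonneg _ hkq
      have : ⌈r * (k:ℚ)⌉ ≤ ⌈w * (k:ℚ)⌉ :=
        Int.ceil_mono (by nlinarith)
      have : (⌈r * (k:ℚ)⌉ : ℚ) ≤ (⌈w * (k:ℚ)⌉ : ℚ) := by exact_mod_cast this
      linarith
end

section
/- Let p and q* be integers with 0 < q* < p and gcd(p, q*) = 1, and let w be a rational number. For each positive integer k set g(k) := (⌊(q*/p)·k⌋ − ⌊w·k⌋)/k. Then 0 is the least element of the set { g(k) : k a positive integer } if and only if 0 ≤ w ≤ q*/p. -/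
/-!
A lower bound `0` for `g` means `⌊w k⌋ ≤ ⌊r k⌋` for every `k > 0`, with `r = q*/p`. This holds when
`w ≤ r`, and fails when `w > r`: once `(w - r) k > 1` the two floors differ. The value `0` is
attained at some `k` iff `⌊r k⌋ = ⌊w k⌋`; since `r ≥ 0` this forces `w ≥ 0`, and conversely
`0 ≤ w ≤ r < 1` gives `⌊r⌋ = ⌊w⌋ = 0`, i.e. `g 1 = 0`.
-/

section FloorMul

variable {K : Type*} [Field K] [LinearOrder K] [IsStrictOrderedRing K] [FloorRing K]

theorem exists_nat_floor_mul_lt_floor_mul [Archimedean K] {r w : K} (h : r < w) :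
    ∃ n : ℕ, 0 < n ∧ ⌊r * n⌋ < ⌊w * n⌋ := by
  have hwr : 0 < w - r := sub_pos.2 h
  obtain ⟨n, hn⟩ := exists_nat_gt (1 / (w - r))
  have hn0 : (0 : K) < n := (one_div_pos.2 hwr).trans hn
  have hgap : r * n + 1 < w * n := by
    rw [div_lt_iff₀ hwr] at hn
    linarith
  refine ⟨n, Nat.cast_pos.1 hn0, Int.lt_iff_add_one_le.2 (Int.le_floor.2 ?_)⟩
  push_cast
  linarith [Int.floor_le (r * n)]

theorem forall_floor_mul_le_floor_mul_iff [Archimedean K] {r w : K} :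
    (∀ n : ℕ, 0 < n → ⌊w * n⌋ ≤ ⌊r * n⌋) ↔ w ≤ r := by
  refine ⟨fun h => ?_, fun h n _ => Int.floor_le_floor (mul_le_mul_of_nonneg_right h n.cast_nonneg)⟩
  by_contra! hrw
  obtain ⟨n, hn, hlt⟩ := exists_nat_floor_mul_lt_floor_mul hrw
  exact (h n hn).not_gt hlt

theorem nonneg_of_floor_mul_eq_floor_mul {r w : K} {k : ℕ} (hr : 0 ≤ r) (hk : 0 < k)
    (h : ⌊r * k⌋ = ⌊w * k⌋) : 0 ≤ w := by
  have hwk : 0 ≤ ⌊w * k⌋ := h ▸ Int.floor_nonneg.2 (mul_nonneg hr k.cast_nonneg)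
  exact nonneg_of_mul_nonneg_left (Int.floor_nonneg.1 hwk) (Nat.cast_pos.2 hk)

theorem isLeast_floor_mul_sub_floor_mul_div_iff [Archimedean K] {r w : K} (hr0 : 0 ≤ r)
    (hr1 : r < 1) :
    IsLeast {x : K | ∃ k : ℕ, 0 < k ∧ x = ((⌊r * k⌋ : K) - ⌊w * k⌋) / k} 0 ↔ 0 ≤ w ∧ w ≤ r := by
  have hzero {k : ℕ} (hk : 0 < k) :
      0 = ((⌊r * k⌋ : K) - ⌊w * k⌋) / k ↔ ⌊r * k⌋ = ⌊w * k⌋ := by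
    rw [eq_comm, div_eq_zero_iff, sub_eq_zero, Int.cast_inj]
    simp [hk.ne']
  have hnonneg {k : ℕ} (hk : 0 < k) :
      0 ≤ ((⌊r * k⌋ : K) - ⌊w * k⌋) / k ↔ ⌊w * k⌋ ≤ ⌊r * k⌋ := by
    rw [le_div_iff₀ (Nat.cast_pos.2 hk), zero_mul, sub_nonneg, Int.cast_le]
  have hlower :
      0 ∈ lowerBounds {x : K | ∃ k : ℕ, 0 < k ∧ x = ((⌊r * k⌋ : K) - ⌊w * k⌋) / k} ↔ w ≤ r := by
    rw [← forall_floor_mul_le_floor_mul_iff]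
    refine ⟨fun h k hk => (hnonneg hk).1 (h ⟨k, hk, rfl⟩), ?_⟩
    rintro h x ⟨k, hk, rfl⟩
    exact (hnonneg hk).2 (h k hk)
  constructor
  · rintro ⟨⟨k, hk, hk0⟩, hlb⟩
    exact ⟨nonneg_of_floor_mul_eq_floor_mul hr0 hk ((hzero hk).1 hk0), hlower.1 hlb⟩
  · rintro ⟨hw0, hwr⟩
    refine ⟨⟨1, one_pos, (hzero one_pos).2 ?_⟩, hlower.2 hwr⟩
    rw [Nat.cast_one, mul_one, mul_one, Int.floor_eq_zero_iff.2 ⟨hr0, hr1⟩,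
      Int.floor_eq_zero_iff.2 ⟨hw0, hwr.trans_lt hr1⟩]

end FloorMul

theorem stmt_15_general (p qstar : ℤ) (hq : 0 < qstar) (hqp : qstar < p) (w : ℚ) :
    IsLeast {x : ℚ | ∃ k : ℕ, 0 < k ∧
        x = ((⌊((qstar : ℚ)/(p : ℚ)) * (k:ℚ)⌋ : ℚ) - (⌊w * (k:ℚ)⌋ : ℚ))/(k:ℚ)} 0 ↔
      (0 ≤ w ∧ w ≤ (qstar : ℚ)/(p : ℚ)) := by
  have hp : (0 : ℚ) < p := by exact_mod_cast hq.trans hqp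
  exact isLeast_floor_mul_sub_floor_mul_div_iff (by positivity)
    ((div_lt_one hp).2 (by exact_mod_cast hqp))

/-- Equation (5.18): with `g k = (⌊(q*/p)k⌋ - ⌊wk⌋)/k`, `0` is the least element of
`{g k : k > 0}` iff `0 ≤ w ≤ q*/p`. -/
theorem stmt_15 (p qstar : ℤ) (hq : 0 < qstar) (hqp : qstar < p)
    (hgcd : Int.gcd p qstar = 1) (w : ℚ) :
    IsLeast {x : ℚ | ∃ k : ℕ, 0 < k ∧
        x = ((⌊((qstar : ℚ)/(p : ℚ)) * (k:ℚ)⌋ : ℚ) - (⌊w * (k:ℚ)⌋ : ℚ))/(k:ℚ)} 0 ↔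
      (0 ≤ w ∧ w ≤ (qstar : ℚ)/(p : ℚ)) :=
  stmt_15_general p qstar hq hqp w
end

section
/- Let p and q* be integers with 0 < q* < p and gcd(p, q*) = 1, and let w be a rational number. For each positive integer k set f(k) := (⌈(q*/p)·k⌉ − ⌈w·k⌉)/k. (i) If w − ⌈w⌉ + 1 ≥ q*/p, then 1 − ⌈w⌉ is the greatest element of the set { f(k) : k a positive integer }. (ii) If w − ⌈w⌉ + 1 < q*/p, then no greatest element of this set is an integer; that is, if y is the greatest element of the set then y is not an integer. -/
/-- Display (5.15): with `f k = (⌈(q*/p)k⌉ - ⌈wk⌉)/k`: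
(i) if `w - ⌈w⌉ + 1 ≥ q*/p` then `1 - ⌈w⌉` is the greatest element of `{f k : k > 0}`;
(ii) if `w - ⌈w⌉ + 1 < q*/p` then no greatest element of this set is an integer. -/
theorem stmt_16 (p qstar : ℤ) (hq : 0 < qstar) (hqp : qstar < p)
    (hgcd : Int.gcd p qstar = 1) (w : ℚ) :
    ((w - (⌈w⌉ : ℚ) + 1 ≥ (qstar : ℚ)/(p : ℚ)) →
      IsGreatest {x : ℚ | ∃ k : ℕ, 0 < k ∧
        x = ((⌈((qstar : ℚ)/(p : ℚ)) * (k:ℚ)⌉ : ℚ) - (⌈w * (k:ℚ)⌉ : ℚ))/(k:ℚ)}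
        ((1 - ⌈w⌉ : ℤ) : ℚ)) ∧
    ((w - (⌈w⌉ : ℚ) + 1 < (qstar : ℚ)/(p : ℚ)) →
      ∀ y : ℚ, IsGreatest {x : ℚ | ∃ k : ℕ, 0 < k ∧
        x = ((⌈((qstar : ℚ)/(p : ℚ)) * (k:ℚ)⌉ : ℚ) - (⌈w * (k:ℚ)⌉ : ℚ))/(k:ℚ)} y →
      ¬∃ z : ℤ, (z:ℚ) = y) := by
  have hp : (0:ℤ) < p := hq.trans hqp
  have hpQ : (0:ℚ) < (p:ℚ) := by exact_mod_cast hp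
  have hqQ : (0:ℚ) < (qstar:ℚ) := by exact_mod_cast hq
  have hqpQ : (qstar:ℚ) < (p:ℚ) := by exact_mod_cast hqp
  have hdiv_pos : (0:ℚ) < (qstar:ℚ)/(p:ℚ) := div_pos hqQ hpQ
  have hdiv_lt : (qstar:ℚ)/(p:ℚ) < 1 := (div_lt_one hpQ).mpr hqpQ
  have hceil1 : ⌈(qstar:ℚ)/(p:ℚ)⌉ = 1 := by
    rw [Int.ceil_eq_iff]
    constructor
    · push_cast; linarith
    · push_cast; linarith
  have hw : (⌈w⌉:ℚ) - 1 < w := by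
    have := Int.ceil_lt_add_one w
    linarith
  have hmem1 : ((1 - ⌈w⌉ : ℤ) : ℚ) ∈ {x : ℚ | ∃ k : ℕ, 0 < k ∧
        x = ((⌈((qstar : ℚ)/(p : ℚ)) * (k:ℚ)⌉ : ℚ) - (⌈w * (k:ℚ)⌉ : ℚ))/(k:ℚ)} := by
    refine ⟨1, one_pos, ?_⟩
    simp only [Nat.cast_one, mul_one, hceil1]
    push_cast
    ring
  constructor
  · -- part (i)
    intro h
    refine ⟨hmem1, ?_⟩
    rintro x ⟨k, hk, rfl⟩
    have hK0 : (0:ℚ) < (k:ℚ) := by exact_mod_cast hk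
    have key : ⌈(qstar:ℚ)/(p:ℚ) * (k:ℚ)⌉ ≤ ⌈w * (k:ℚ)⌉ + (1 - ⌈w⌉) * k := by
      have h1 : (qstar:ℚ)/(p:ℚ) * (k:ℚ) ≤ w * (k:ℚ) + (((1 - ⌈w⌉) * k : ℤ) : ℚ) := by
        push_cast
        nlinarith [mul_le_mul_of_nonneg_right h hK0.le]
      calc ⌈(qstar:ℚ)/(p:ℚ) * (k:ℚ)⌉ ≤ ⌈w * (k:ℚ) + (((1 - ⌈w⌉) * k : ℤ) : ℚ)⌉ :=
            Int.ceil_mono h1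
        _ = ⌈w * (k:ℚ)⌉ + (1 - ⌈w⌉) * k := Int.ceil_add_intCast _ _
    rw [div_le_iff₀ hK0]
    have hkeyQ : ((⌈(qstar:ℚ)/(p:ℚ) * (k:ℚ)⌉ : ℤ) : ℚ) ≤ ((⌈w * (k:ℚ)⌉ + (1 - ⌈w⌉) * k : ℤ) : ℚ) := by
      exact_mod_cast key
    push_cast at hkeyQ ⊢
    linarith
  · -- part (ii)
    intro h y hy
    rintro ⟨z, rfl⟩
    obtain ⟨m, hm⟩ : ∃ m : ℤ, m = ⌈w⌉ := ⟨_, rfl⟩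
    rw [← hm] at h hw hmem1
    -- lower bound: 1 - m ≤ z
    have hz_ge : 1 - m ≤ z := by
      have := hy.2 hmem1
      exact_mod_cast this
    -- upper bound: z ≤ 1 - m
    obtain ⟨k, hk, hfk⟩ := hy.1
    have hK0 : (0:ℚ) < (k:ℚ) := by exact_mod_cast hk
    have hzk : z * (k:ℤ) = ⌈(qstar:ℚ)/(p:ℚ) * (k:ℚ)⌉ - ⌈w * (k:ℚ)⌉ := by
      have h2 : (z:ℚ) * (k:ℚ) = ((⌈(qstar:ℚ)/(p:ℚ) * (k:ℚ)⌉ : ℚ) - (⌈w * (k:ℚ)⌉ : ℚ)) := by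
        rw [hfk]
        field_simp
      exact_mod_cast h2
    have hA : ⌈(qstar:ℚ)/(p:ℚ) * (k:ℚ)⌉ ≤ (k:ℤ) := by
      apply Int.ceil_le.mpr
      push_cast
      exact mul_le_of_le_one_left hK0.le hdiv_lt.le
    have hB : (m - 1) * (k:ℤ) + 1 ≤ ⌈w * (k:ℚ)⌉ := by
      have : ((m - 1) * (k:ℤ) : ℤ) < ⌈w * (k:ℚ)⌉ := by
        apply Int.lt_ceil.mpr
        push_cast
        exact mul_lt_mul_of_pos_right hw hK0
      omega
    have hz_le : z ≤ 1 - m := by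
      by_contra hcon
      push_neg at hcon
      have hcon' : 2 - m ≤ z := by omega
      have hk1 : (1:ℤ) ≤ (k:ℤ) := by exact_mod_cast hk
      nlinarith [mul_le_mul_of_nonneg_right hcon' (by linarith : (0:ℤ) ≤ (k:ℤ))]
    have hz_eq : z = 1 - m := le_antisymm hz_le hz_ge
    -- now construct a better element
    have hu0 : (0:ℚ) < w - (m:ℚ) + 1 := by linarith
    obtain ⟨c, hcdef⟩ : ∃ c : ℚ, c = (qstar:ℚ) - p * (w - (m:ℚ) + 1) := ⟨_, rfl⟩
    have hc : (0:ℚ) < c := by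
      have h4 := (lt_div_iff₀ hpQ).mp h
      rw [hcdef]
      nlinarith [h4]
    obtain ⟨a, b, hab⟩ := Int.isCoprime_iff_gcd_eq_one.mpr hgcd
    obtain ⟨t, ht⟩ := exists_nat_ge (1/c - (b:ℚ))
    obtain ⟨K, hKdef⟩ : ∃ K : ℤ, K = b + (t:ℤ) * p := ⟨_, rfl⟩
    have hKQ : ((K:ℤ):ℚ) = (b:ℚ) + (t:ℚ) * p := by rw [hKdef]; push_cast; ring
    have hKge : 1/c ≤ (K:ℚ) := by
      rw [hKQ]
      have hp1 : (1:ℚ) ≤ (p:ℚ) := by exact_mod_cast hp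
      have ht0 : (0:ℚ) ≤ (t:ℚ) := Nat.cast_nonneg t
      nlinarith
    have hKposQ : (0:ℚ) < (K:ℚ) := lt_of_lt_of_le (by positivity) hKge
    have hKpos : 0 < K := by exact_mod_cast hKposQ
    have hKc : 1 ≤ (K:ℚ) * c := by
      have := (div_le_iff₀ hc).mp hKge
      linarith
    obtain ⟨s, hsdef⟩ : ∃ s : ℤ, s = qstar * (t:ℤ) - a := ⟨_, rfl⟩
    have hs : qstar * K = 1 + p * s := by
      rw [hKdef, hsdef]
      linear_combination hab
    have hsQ : (qstar:ℚ) * (K:ℚ) = 1 + (p:ℚ) * (s:ℚ) := by exact_mod_cast hs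
    have hceilK : ⌈(qstar:ℚ)/(p:ℚ) * (K:ℚ)⌉ = s + 1 := by
      have hx : (qstar:ℚ)/(p:ℚ) * (K:ℚ) = 1/(p:ℚ) + (s:ℚ) := by
        field_simp
        linear_combination hsQ
      rw [hx, Int.ceil_add_intCast]
      have h1p : ⌈(1:ℚ)/(p:ℚ)⌉ = 1 := by
        rw [Int.ceil_eq_iff]
        constructor
        · have h0 : (0:ℚ) < 1/(p:ℚ) := by positivity
          push_cast
          linarith
        · push_cast
          rw [div_le_one hpQ]
          have : (1:ℤ) ≤ p := hp
          exact_mod_cast this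
      rw [h1p]
      omega
    have huK : (w - (m:ℚ) + 1) * (K:ℚ) ≤ (s:ℚ) := by
      have h3 : (p:ℚ) * ((w - (m:ℚ) + 1) * (K:ℚ)) ≤ (p:ℚ) * (s:ℚ) := by
        rw [hcdef] at hKc
        nlinarith
      exact le_of_mul_le_mul_left h3 hpQ
    have hceilW : ⌈w * (K:ℚ)⌉ ≤ s + (m - 1) * K := by
      have hsplit : w * (K:ℚ) = (w - (m:ℚ) + 1) * (K:ℚ) + (((m-1) * K : ℤ) : ℚ) := by
        push_cast
        ring
      rw [hsplit, Int.ceil_add_intCast]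
      have := Int.ceil_le.mpr huK
      omega
    -- membership of f(K.toNat)
    have hknQ : ((K.toNat : ℕ):ℚ) = (K:ℚ) := by exact_mod_cast Int.toNat_of_nonneg hKpos.le
    have hknpos : 0 < K.toNat := by omega
    have hmemK : ((⌈((qstar : ℚ)/(p : ℚ)) * ((K.toNat : ℕ):ℚ)⌉ : ℚ) -
          (⌈w * ((K.toNat : ℕ):ℚ)⌉ : ℚ))/((K.toNat : ℕ):ℚ) ∈ {x : ℚ | ∃ k : ℕ, 0 < k ∧
        x = ((⌈((qstar : ℚ)/(p : ℚ)) * (k:ℚ)⌉ : ℚ) - (⌈w * (k:ℚ)⌉ : ℚ))/(k:ℚ)} :=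
      ⟨K.toNat, hknpos, rfl⟩
    have hle := hy.2 hmemK
    rw [hknQ] at hle
    rw [div_le_iff₀ hKposQ] at hle
    have hCK : ((⌈(qstar:ℚ)/(p:ℚ) * (K:ℚ)⌉ : ℤ) : ℚ) = (s:ℚ) + 1 := by
      exact_mod_cast hceilK
    have hCW : ((⌈w * (K:ℚ)⌉ : ℤ) : ℚ) ≤ (s:ℚ) + ((m:ℚ) - 1) * (K:ℚ) := by
      exact_mod_cast hceilW
    have hzK : (z:ℚ) * (K:ℚ) = (1 - (m:ℚ)) * (K:ℚ) := by
      rw [hz_eq]; push_cast; ring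
    linarith [hle, hCK, hCW, hzK]
end

section
/- Let p and q* be integers with 0 < q* < p and gcd(p, q*) = 1, and let w be a rational number. For each positive integer k set g(k) := (⌊(q*/p)·k⌋ − ⌊w·k⌋)/k. (i) If w − ⌊w⌋ ≤ q*/p, then −⌊w⌋ is the least element of the set { g(k) : k a positive integer }. (ii) If w − ⌊w⌋ > q*/p, then no least element of this set is an integer; that is, if y is the least element of the set then y is not an integer. -/
/-- Display (5.16): with `g k = (⌊(q*/p)k⌋ - ⌊wk⌋)/k`:
(i) if `w - ⌊w⌋ ≤ q*/p` then `-⌊w⌋` is the least element of `{g k : k > 0}`;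
(ii) if `w - ⌊w⌋ > q*/p` then no least element of this set is an integer. -/
theorem stmt_17 (p qstar : ℤ) (hq : 0 < qstar) (hqp : qstar < p)
    (hgcd : Int.gcd p qstar = 1) (w : ℚ) :
    ((w - (⌊w⌋ : ℚ) ≤ (qstar : ℚ)/(p : ℚ)) →
      IsLeast {x : ℚ | ∃ k : ℕ, 0 < k ∧
        x = ((⌊((qstar : ℚ)/(p : ℚ)) * (k:ℚ)⌋ : ℚ) - (⌊w * (k:ℚ)⌋ : ℚ))/(k:ℚ)}
        ((-⌊w⌋ : ℤ) : ℚ)) ∧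
    ((w - (⌊w⌋ : ℚ) > (qstar : ℚ)/(p : ℚ)) →
      ∀ y : ℚ, IsLeast {x : ℚ | ∃ k : ℕ, 0 < k ∧
        x = ((⌊((qstar : ℚ)/(p : ℚ)) * (k:ℚ)⌋ : ℚ) - (⌊w * (k:ℚ)⌋ : ℚ))/(k:ℚ)} y →
      ¬∃ z : ℤ, (z:ℚ) = y) := by
  have hp : (0:ℤ) < p := hq.trans hqp
  set α : ℚ := (qstar:ℚ)/(p:ℚ) with hαdef
  have hα0 : 0 < α := div_pos (by exact_mod_cast hq) (by exact_mod_cast hp)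
  have hα1 : α < 1 := by
    rw [hαdef, div_lt_one (by exact_mod_cast hp)]
    exact_mod_cast hqp
  have hfloorw : ∀ k : ℕ, ⌊w * (k:ℚ)⌋ = ⌊w⌋ * k + ⌊(w - (⌊w⌋:ℚ)) * k⌋ := by
    intro k
    have h1 : w * (k:ℚ) = ((⌊w⌋ * k : ℤ) : ℚ) + (w - (⌊w⌋:ℚ)) * k := by
      push_cast; ring
    rw [h1, Int.floor_intCast_add]
  have hfr1 : w - (⌊w⌋:ℚ) < 1 := by
    have := Int.lt_floor_add_one w; linarith
  constructor
  · intro hle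
    constructor
    · refine ⟨1, one_pos, ?_⟩
      have h0 : ⌊α * ((1:ℕ):ℚ)⌋ = 0 := by
        rw [Int.floor_eq_zero_iff]
        constructor
        · simpa using hα0.le
        · simpa using hα1
      have h2 : ⌊w * ((1:ℕ):ℚ)⌋ = ⌊w⌋ := by norm_num
      rw [h0, h2]
      push_cast; ring
    · rintro x ⟨k, hk, rfl⟩
      have hk0 : (0:ℚ) < (k:ℚ) := by exact_mod_cast hk
      rw [le_div_iff₀ hk0]
      have hfl : ⌊(w - (⌊w⌋:ℚ)) * k⌋ ≤ ⌊α * k⌋ :=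
        Int.floor_le_floor (mul_le_mul_of_nonneg_right hle hk0.le)
      have := hfloorw k
      have hcast : ((⌊w * (k:ℚ)⌋ : ℚ)) = (⌊w⌋:ℚ) * k + (⌊(w - (⌊w⌋:ℚ)) * k⌋ : ℚ) := by
        rw [this]; push_cast; ring
      have hflq : ((⌊(w - (⌊w⌋:ℚ)) * k⌋ : ℚ)) ≤ (⌊α * k⌋ : ℚ) := by exact_mod_cast hfl
      rw [hcast]
      push_cast
      linarith
  · rintro hgt y ⟨⟨k, hk, rfl⟩, hlb⟩ ⟨z, hz⟩
    have hk0 : (0:ℚ) < (k:ℚ) := by exact_mod_cast hk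
    -- first, show z = -⌊w⌋
    have hzk : (z:ℚ) * k = (⌊α * k⌋ : ℚ) - (⌊w * (k:ℚ)⌋ : ℚ) := by
      rw [hz]; field_simp
    have hzkZ : z * k = ⌊α * k⌋ - ⌊w * (k:ℚ)⌋ := by exact_mod_cast hzk
    have hA : (0:ℤ) ≤ ⌊α * k⌋ := Int.floor_nonneg.mpr (by positivity)
    have hB : ⌊(w - (⌊w⌋:ℚ)) * k⌋ < (k:ℤ) := by
      rw [Int.floor_lt]
      push_cast
      nlinarith
    have hC : ⌊α * k⌋ ≤ ⌊(w - (⌊w⌋:ℚ)) * k⌋ :=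
      Int.floor_le_floor (mul_le_mul_of_nonneg_right hgt.le hk0.le)
    have hkZ : (0:ℤ) < (k:ℤ) := by exact_mod_cast hk
    have heq : (z + ⌊w⌋) * k = ⌊α * k⌋ - ⌊(w - (⌊w⌋:ℚ)) * k⌋ := by
      rw [hfloorw k] at hzkZ; linarith
    have hz1 : z + ⌊w⌋ = 0 := by
      by_contra hne
      rcases lt_or_gt_of_ne hne with hlt | hgt'
      · have : (z + ⌊w⌋) * k ≤ -1 * k := by
          apply mul_le_mul_of_nonneg_right _ hkZ.le
          omega
        omega
      · nlinarith
    -- now derive a contradiction: find k' with g k' < -⌊w⌋ = y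
    set δ : ℚ := (w - (⌊w⌋:ℚ)) - α with hδ
    have hδ0 : 0 < δ := by rw [hδ]; linarith
    obtain ⟨N, hN⟩ := exists_nat_gt (1/δ)
    have hN0 : 0 < N := by
      by_contra hN0
      interval_cases N
      simp at hN
      have := one_div_pos.mpr hδ0
      linarith
    have hNq : (0:ℚ) < (N:ℚ) := by exact_mod_cast hN0
    have hδN : 1 < δ * N := by
      rw [div_lt_iff₀ hδ0] at hN; linarith
    -- ⌊α N⌋ + 1 ≤ ⌊fract w * N⌋
    have hsep : ⌊α * N⌋ + 1 ≤ ⌊(w - (⌊w⌋:ℚ)) * N⌋ := by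
      have : α * N + 1 ≤ (w - (⌊w⌋:ℚ)) * N := by
        rw [hδ] at hδN; nlinarith
      calc ⌊α * N⌋ + 1 = ⌊α * N + (1:ℤ)⌋ := by rw [Int.floor_add_intCast]
        _ ≤ ⌊(w - (⌊w⌋:ℚ)) * N⌋ := Int.floor_le_floor (by push_cast; linarith)
    have hmem := hlb ⟨N, hN0, rfl⟩
    rw [← hz, le_div_iff₀ hNq] at hmem
    have hmemZ : z * N ≤ ⌊α * N⌋ - ⌊w * (N:ℚ)⌋ := by exact_mod_cast hmem
    rw [hfloorw N] at hmemZ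
    have hzval : z = -⌊w⌋ := by omega
    rw [hzval, neg_mul] at hmemZ
    omega
end
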